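/- arXiv:2107.10619 — 10 statements merged into one kernel-verified Lean document; each statement's English description precedes it below -/
import Mathlib

section
/- Let m ≥ 4, let G = (ℤ/mℤ)², let g ∈ G, and let S = f₁^[m−1] · ∏_{i=1}^{m} (x_i f₁ + f₂) ∈ Υ_u(G), where (f₁,f₂) is a basis of G and x₁,…,x_m ∈ [0,m−1]. If S' = f₁^[−2] · S · (f₁+g) · (f₁−g) ∈ Υ(G), then g = 0 and S' = S. -/
/-- `(e₁, e₂)` is a basis of the abelian group `G`, i.e. `G = ⟨e₁⟩ ⊕ ⟨e₂⟩`. -/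
def IsBasis {G : Type*} [AddCommGroup G] (e₁ e₂ : G) : Prop :=
  AddSubgroup.zmultiples e₁ ⊔ AddSubgroup.zmultiples e₂ = ⊤ ∧
    AddSubgroup.zmultiples e₁ ⊓ AddSubgroup.zmultiples e₂ = ⊥

/-- `Υ(G)` for `G = (ℤ/mℤ)²`: all sequences `e₁^[m-1] · ∏_{i=1}^m (xᵢe₁ + e₂)` for some
basis `(e₁, e₂)` and `x₁, …, x_m ∈ [0, m-1]` with `x₁ + ⋯ + x_m ≡ 1 (mod m)`. -/
def Upsilon (m : ℕ) : Set (Multiset (ZMod m × ZMod m)) :=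
  { S | ∃ (e₁ e₂ : ZMod m × ZMod m) (x : Fin m → ℕ),
      IsBasis e₁ e₂ ∧ (∀ i, x i ≤ m - 1) ∧ (∑ i, x i) % m = 1 % m ∧
      S = Multiset.replicate (m - 1) e₁ +
          Multiset.map (fun i => x i • e₁ + e₂) (Finset.univ : Finset (Fin m)).val }

/-- `Υ_u(G)`: members of `Υ(G)` with a unique term of multiplicity `m - 1`. -/
def UpsilonU (m : ℕ) : Set (Multiset (ZMod m × ZMod m)) :=
  { S | S ∈ Upsilon m ∧ ∃! g, S.count g = m - 1 }

/-- `Υ_nu(G)`: sequences `e₁^[m-1] · e₂^[m-1] · (e₁ + e₂)` for some basis `(e₁, e₂)`. -/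
def UpsilonNU (m : ℕ) : Set (Multiset (ZMod m × ZMod m)) :=
  { S | ∃ (e₁ e₂ : ZMod m × ZMod m), IsBasis e₁ e₂ ∧
      S = Multiset.replicate (m - 1) e₁ + Multiset.replicate (m - 1) e₂ + {e₁ + e₂} }


/-! Let `π` be the coordinate functional of the basis `(e₁, e₂)` underlying `S'` that kills `e₁`
and sends `e₂` to `1`, so that `π(S') = 0^[m-1] · 1^[m]`. Apply `π` to
`S' · f₁^[2] = S · (f₁ + g) · (f₁ - g)`. The value `π f₁` occurs at least `m - 1 ≥ 3` times on
the right, hence `π f₁ ∈ {0, 1}`.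

If `π f₁ = 1`, then `π(f₁ ± g) ∈ {0, 1}` forces `π g = 0`, so `π` takes the value `0` on exactly
`m - 1` of the terms `xᵢ f₁ + f₂`. Since `π` is injective on `f₂ + ℕ f₁`, these terms are equal,
and `S` has two distinct terms of multiplicity `m - 1`, contradicting `S ∈ Υ_u(G)`.

If `π f₁ = 0`, then `π f₂ = 1`, so `e₁` and `f₁` are the only possible terms in `ker π` besides
`f₁ ± g`; counting `e₁` gives `e₁ = f₁` and `f₁ ∈ {f₁ + g, f₁ - g}`, i.e. `g = 0`. -/

theorem IsBasis.exists_coord {m : ℕ} [NeZero m] {e₁ e₂ : ZMod m × ZMod m}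
    (h : IsBasis e₁ e₂) : ∃ π : ZMod m × ZMod m →+ ZMod m, π e₁ = 0 ∧ π e₂ = 1 := by
  let ψ : ZMod m × ZMod m →ₗ[ZMod m] ZMod m × ZMod m :=
    (LinearMap.toSpanSingleton _ _ e₁).coprod (LinearMap.toSpanSingleton _ _ e₂)
  have hψ : Function.Surjective ψ := by
    intro z
    obtain ⟨_, ⟨k, rfl⟩, _, ⟨l, rfl⟩, rfl⟩ := AddSubgroup.mem_sup.mp (h.1 ▸ AddSubgroup.mem_top z)
    exact ⟨(k, l), by simp [ψ, Int.cast_smul_eq_zsmul]⟩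
  let Ψ := LinearEquiv.ofBijective ψ ⟨Finite.injective_iff_surjective.mpr hψ, hψ⟩
  have hΨ₁ : Ψ (1, 0) = e₁ := show ψ (1, 0) = e₁ by simp [ψ]
  have hΨ₂ : Ψ (0, 1) = e₂ := show ψ (0, 1) = e₂ by simp [ψ]
  refine ⟨(AddMonoidHom.snd _ _).comp Ψ.symm.toAddMonoidHom, ?_, ?_⟩
  · simp [← hΨ₁]
  · simp [← hΨ₂]

theorem IsBasis.notMem_map_nsmul_add {m : ℕ} [Fact (1 < m)] {f₁ f₂ : ZMod m × ZMod m}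
    (h : IsBasis f₁ f₂) {ι : Type*} (x : ι → ℕ) (s : Multiset ι) :
    f₁ ∉ s.map fun i => x i • f₁ + f₂ := by
  obtain ⟨ρ, hρ₁, hρ₂⟩ := h.exists_coord
  intro hf₁
  obtain ⟨i, -, hi⟩ := Multiset.mem_map.mp hf₁
  have := congrArg ρ hi
  rw [map_add, map_nsmul, hρ₁, hρ₂, smul_zero, zero_add] at this
  exact one_ne_zero this

namespace Multiset

variable {α β : Type*} [DecidableEq α]

theorem eq_or_eq_of_replicate_add_eq {a b c : α} {k l n : ℕ} {R : Multiset α} (hn : 2 < n)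
    (h : replicate k a + replicate l b + replicate 2 c = replicate n c + R) : c = a ∨ c = b := by
  by_contra! hc
  have := congrArg (count c) h
  simp [count_replicate, hc.1.symm, hc.2.symm] at this
  omega

theorem exists_mem_count_eq_of_injOn [DecidableEq β] {f : α → β} {s : Multiset α} {b : β}
    (hf : Set.InjOn f {x | x ∈ s}) (hb : 0 < count b (s.map f)) :
    ∃ a ∈ s, f a = b ∧ count a s = count b (s.map f) := by
  obtain ⟨a, ha, rfl⟩ := mem_map.mp (count_pos.mp hb)
  exact ⟨a, ha, rfl, (count_map_eq_count f s hf a ha).symm⟩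

end Multiset

open Multiset

theorem ZMod.eq_zero_of_one_add_one_sub_mem {m : ℕ} (hm : 3 ≤ m) {w : ZMod m}
    (h₁ : 1 + w = 0 ∨ 1 + w = 1) (h₂ : 1 - w = 0 ∨ 1 - w = 1) : w = 0 := by
  have : Fact (1 < m) := ⟨by omega⟩
  have h2 : (2 : ZMod m) ≠ 0 := by
    have := (ZMod.natCast_eq_zero_iff 2 m).not.mpr (Nat.not_dvd_of_pos_of_lt two_pos (by omega))
    exact_mod_cast this
  rcases h₁ with h₁ | h₁
  · have hw : w = -1 := by linear_combination h₁
    subst hw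
    rcases h₂ with h₂ | h₂
    · exact absurd (by linear_combination h₂) h2
    · exact absurd (by linear_combination h₂) (one_ne_zero (α := ZMod m))
  · linear_combination h₁

theorem ZMod.count_zero_eq_of_replicate_add_pair_eq {m : ℕ} (hm : 3 ≤ m) {w : ZMod m}
    {R : Multiset (ZMod m)}
    (h : replicate (m - 1) 0 + replicate m 1 + replicate 2 1 =
      replicate (m - 1) 1 + R + {1 + w, 1 - w}) :
    count 0 R = m - 1 := by
  have : Fact (1 < m) := ⟨by omega⟩
  have hmem : ∀ z ∈ ({1 + w, 1 - w} : Multiset (ZMod m)), z = 0 ∨ z = 1 := by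
    intro z hz
    have : z ∈ replicate (m - 1) 0 + replicate m 1 + replicate 2 (1 : ZMod m) :=
      h ▸ mem_add.mpr (Or.inr hz)
    simp only [mem_add, mem_replicate] at this
    tauto
  obtain rfl :=
    ZMod.eq_zero_of_one_add_one_sub_mem (w := w) hm (hmem _ (by simp)) (hmem _ (by simp))
  have := congrArg (count 0) h
  simp [count_replicate] at this
  omega

section Coordinate

variable {m : ℕ} {G : Type*} [AddCommGroup G] {π : G →+ ZMod m}

theorem forall_mem_map_nsmul_add_coord {e₁ : G} (he₁ : π e₁ = 0) (e₂ : G) {ι : Type*}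
    (x : ι → ℕ) (s : Multiset ι) : ∀ t ∈ s.map fun i => x i • e₁ + e₂, π t = π e₂ := by
  simp [he₁]

theorem injOn_coord_nsmul_add [Module (ZMod m) G] {f₁ : G} (hf₁ : π f₁ = 1) (f₂ : G) :
    Set.InjOn π (Set.range fun a : ℕ => a • f₁ + f₂) := by
  rintro _ ⟨a, rfl⟩ _ ⟨b, rfl⟩ h
  have hab : (a : ZMod m) = b := by simpa [hf₁] using h
  simp only [← Nat.cast_smul_eq_nsmul (ZMod m), hab]

variable {e₁ f₁ g : G} {T T' : Multiset G}

theorem map_coord_eq (he₁ : π e₁ = 0) (hT' : ∀ t ∈ T', π t = 1) (hT'card : card T' = m)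
    (hE : replicate (m - 1) e₁ + T' + replicate 2 f₁ =
      replicate (m - 1) f₁ + T + {f₁ + g, f₁ - g}) :
    replicate (m - 1) 0 + replicate m 1 + replicate 2 (π f₁) =
      replicate (m - 1) (π f₁) + T.map π + {π f₁ + π g, π f₁ - π g} := by
  have hT'π : T'.map π = replicate m 1 := eq_replicate.mpr ⟨by simpa, by simpa using hT'⟩
  simpa [map_replicate, he₁, hT'π] using congrArg (map π) hE

theorem eq_zero_of_coord_eq_zero [DecidableEq G] (hm : 4 ≤ m) (he₁ : π e₁ = 0)
    (hT' : ∀ t ∈ T', π t = 1) (hT'card : card T' = m) (hf₁ : π f₁ = 0) {v : ZMod m}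
    (hT : ∀ t ∈ T, π t = v) (hTcard : card T = m)
    (hE : replicate (m - 1) e₁ + T' + replicate 2 f₁ =
      replicate (m - 1) f₁ + T + {f₁ + g, f₁ - g}) : g = 0 := by
  have : Fact (1 < m) := ⟨by omega⟩
  have hv : v = 1 := by
    have hπE := map_coord_eq he₁ hT' hT'card hE
    have hTπ : T.map π = replicate m v := eq_replicate.mpr ⟨by simpa, by simpa using hT⟩
    rw [hf₁, hTπ] at hπE
    by_contra hv
    have hcount := congrArg (count 1) hπE
    have h2 : count 1 ({0 + π g, 0 - π g} : Multiset (ZMod m)) ≤ 2 :=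
      (count_le_card _ _).trans (by simp)
    simp only [count_add, count_replicate_self, count_replicate, if_neg zero_ne_one,
      if_neg hv] at hcount
    omega
  have he₁T' : e₁ ∉ T' := fun h => zero_ne_one (he₁ ▸ hT' e₁ h)
  have he₁T : e₁ ∉ T := fun h => zero_ne_one (he₁ ▸ hv ▸ hT e₁ h)
  have hcount := congrArg (count e₁) hE
  have h2 : count e₁ {f₁ + g, f₁ - g} ≤ 2 := (count_le_card _ _).trans (by simp)
  simp only [count_add, count_replicate_self, count_eq_zero.mpr he₁T,
    count_eq_zero.mpr he₁T'] at hcount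
  by_cases hfe : f₁ = e₁
  · subst hfe
    simp only [count_replicate_self] at hcount
    have : f₁ ∈ ({f₁ + g, f₁ - g} : Multiset G) := count_pos.mp (by omega)
    rcases mem_cons.mp this with h | h
    · exact add_eq_left.mp h.symm
    · exact sub_eq_self.mp (mem_singleton.mp h).symm
  · simp only [count_replicate, if_neg hfe] at hcount
    omega

theorem coord_ne_one [DecidableEq G] [Module (ZMod m) G] (hm : 3 ≤ m) {f₂ : G}
    (hT : ∀ t ∈ T, t ∈ Set.range fun a : ℕ => a • f₁ + f₂) (hf₁T : f₁ ∉ T)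
    (huniq : ∃! a, count a (replicate (m - 1) f₁ + T) = m - 1)
    (hπE : replicate (m - 1) 0 + replicate m 1 + replicate 2 (π f₁) =
      replicate (m - 1) (π f₁) + T.map π + {π f₁ + π g, π f₁ - π g}) :
    π f₁ ≠ 1 := by
  have : Fact (1 < m) := ⟨by omega⟩
  intro hf₁
  rw [hf₁] at hπE
  have hcount : count 0 (T.map π) = m - 1 := ZMod.count_zero_eq_of_replicate_add_pair_eq hm hπE
  obtain ⟨t, htT, ht, htcount⟩ := exists_mem_count_eq_of_injOn
    ((injOn_coord_nsmul_add hf₁ f₂).mono hT) (hcount ▸ by omega : 0 < count 0 (T.map π))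
  have htf : t ≠ f₁ := by
    rintro rfl
    exact zero_ne_one (ht.symm.trans hf₁)
  obtain ⟨a, -, ha⟩ := huniq
  refine htf ((ha t ?_).trans (ha f₁ ?_).symm)
  · simp [count_replicate, htf.symm, htcount, hcount]
  · simp [count_eq_zero.mpr hf₁T]

end Coordinate

theorem stmt_0_general (m : ℕ) (hm : 4 ≤ m) (g f₁ f₂ : ZMod m × ZMod m)
    (x : Fin m → ℕ) (hbasis : IsBasis f₁ f₂)
    (S : Multiset (ZMod m × ZMod m))
    (hS : S = Multiset.replicate (m - 1) f₁ +
        Multiset.map (fun i => x i • f₁ + f₂) (Finset.univ : Finset (Fin m)).val)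
    (hSU : S ∈ UpsilonU m)
    (S' : Multiset (ZMod m × ZMod m))
    (hS' : S' = (S - Multiset.replicate 2 f₁) + {f₁ + g, f₁ - g})
    (hS'U : S' ∈ Upsilon m) :
    g = 0 ∧ S' = S := by
  have : Fact (1 < m) := ⟨by omega⟩
  obtain ⟨e₁, e₂, y, he, -, -, hS'eq⟩ := hS'U
  obtain ⟨π, hπ₁, hπ₂⟩ := he.exists_coord
  have h2S : replicate 2 f₁ ≤ S :=
    hS ▸ ((replicate_le_replicate f₁).mpr (by omega)).trans (le_add_right _ _)
  have hE : replicate (m - 1) e₁ + (Finset.univ.val.map fun j => y j • e₁ + e₂) +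
      replicate 2 f₁ = replicate (m - 1) f₁ +
        (Finset.univ.val.map fun i => x i • f₁ + f₂) + {f₁ + g, f₁ - g} := by
    rw [← hS'eq, hS', tsub_add_eq_add_tsub h2S,
      tsub_add_cancel_of_le (h2S.trans (le_add_right _ _)), hS]
  have hT' := hπ₂ ▸ forall_mem_map_nsmul_add_coord hπ₁ e₂ y Finset.univ.val
  have hπE := map_coord_eq hπ₁ hT' (by simp) hE
  have hg : g = 0 := by
    rcases eq_or_eq_of_replicate_add_eq (by omega) (hπE.trans (add_assoc _ _ _)) with hf₁ | hf₁
    · exact eq_zero_of_coord_eq_zero hm hπ₁ hT' (by simp) hf₁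
        (forall_mem_map_nsmul_add_coord hf₁ f₂ x _) (by simp) hE
    · refine absurd hf₁ (coord_ne_one (f₂ := f₂) (by omega) ?_
        (hbasis.notMem_map_nsmul_add x _) (hS ▸ hSU.2) hπE)
      intro t ht
      obtain ⟨i, -, rfl⟩ := mem_map.mp ht
      exact ⟨x i, rfl⟩
  refine ⟨hg, ?_⟩
  rw [hS', hg, add_zero, sub_zero, insert_eq_cons, ← replicate_one, ← replicate_succ,
    tsub_add_cancel_of_le h2S]

theorem stmt_0 (m : ℕ) (hm : 4 ≤ m) (g f₁ f₂ : ZMod m × ZMod m)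
    (x : Fin m → ℕ) (hx : ∀ i, x i ≤ m - 1) (hbasis : IsBasis f₁ f₂)
    (S : Multiset (ZMod m × ZMod m))
    (hS : S = Multiset.replicate (m - 1) f₁ +
        Multiset.map (fun i => x i • f₁ + f₂) (Finset.univ : Finset (Fin m)).val)
    (hSU : S ∈ UpsilonU m)
    (S' : Multiset (ZMod m × ZMod m))
    (hS' : S' = (S - Multiset.replicate 2 f₁) + {f₁ + g, f₁ - g})
    (hS'U : S' ∈ Upsilon m) :
    g = 0 ∧ S' = S :=
  stmt_0_general m hm g f₁ f₂ x hbasis S hS hSU S' hS' hS'U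
end

section
/- Let m ≥ 4, let G = (ℤ/mℤ)², let g ∈ G, and let S = f₁^[m−1] · ∏_{i=1}^{m} (x_i f₁ + f₂) ∈ Υ_u(G), where (f₁,f₂) is a basis of G and x₁,…,x_m ∈ [0,m−1]. If, for some j ∈ [1,m], S' = f₁^[−1] · (x_j f₁ + f₂)^[−1] · S · (f₁+g) · (x_j f₁ + f₂ − g) ∈ Υ(G), then g ∈ {0, (x_j − 1)f₁ + f₂} and S' = S. -/
/-!
Write `S' = R · (f₁ + g) · (x_j f₁ + f₂ - g)` with `R = f₁^[m-2] · ∏_{i ≠ j} (xᵢ f₁ + f₂)`,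
and let `e₁` be the term of multiplicity `m - 1` of `S' ∈ Υ(G)`.

If `e₁ = f₁`, counting `f₁` shows `f₁ ∈ {f₁ + g, x_j f₁ + f₂ - g}`, which gives both claims.

If `e₁ ≠ f₁`, then (as `m ≥ 4`) `e₁` is a term of `R`, say `e₁ = c f₁ + f₂`. Since `f₁` is also a
term of `S'`, every term of `S'` other than `e₁` lies in `f₁ + ⟨e₁⟩`, which forces `xᵢ ∈ {c, c + 1}`
for `i ≠ j`, with at least `m - 2` of them equal to `c`. The relation `∑ xᵢ = 1`, which comes from
`σ(S) = 0`, then forces exactly `m - 1` of all the `xᵢ` to equal `c`: so `c f₁ + f₂` is a second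
term of multiplicity `m - 1` in `S`, contradicting `S ∈ Υ_u(G)`.
-/

open Multiset

namespace Multiset

variable {α : Type*} [AddCommMonoid α] [DecidableEq α]

theorem sum_eq_of_forall_mem_eq_or_eq {s : Multiset α} {c d : α}
    (h : ∀ x ∈ s, x = c ∨ x = d) : s.sum = s.count c • c + (card s - s.count c) • d := by
  set t := filter (fun x => ¬x = c) s
  have hs : replicate (s.count c) c + t = s := filter_eq' s c ▸ filter_add_not (· = c) s
  have ht : t = replicate (card s - s.count c) d := by
    have hcard : card t = card s - s.count c := by
      have := congrArg card hs
      rw [card_add, card_replicate] at this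
      omega
    rw [← hcard, eq_replicate_card]
    intro x hx
    exact (h x (mem_of_mem_filter hx)).resolve_left (of_mem_filter (p := fun x => ¬x = c) hx)
  conv_lhs => rw [← hs, ht]
  rw [sum_add, sum_replicate, sum_replicate]

end Multiset

theorem eq_zero_or_eq_sub_of_mem_pair {G : Type*} [AddCommGroup G] {v u g : G}
    (h : v ∈ ({v + g, u - g} : Multiset G)) :
    (g = 0 ∨ g = u - v) ∧ ({v + g, u - g} : Multiset G) = {v, u} := by
  rcases mem_cons.mp h with h | h
  · obtain rfl := left_eq_add.mp h
    simp
  · obtain rfl := eq_sub_of_add_eq' (eq_sub_iff_add_eq.mp (mem_singleton.mp h))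
    rw [add_sub_cancel, sub_sub_cancel, pair_comm]
    exact ⟨Or.inr rfl, rfl⟩

theorem count_eq_pred_of_forall_mem_erase {m : ℕ} (hm : 2 ≤ m) {X : Multiset (ZMod m)}
    (hX : card X = m) (hsum : X.sum = 1) {a c : ZMod m} (ha : a ∈ X)
    (hmem : ∀ s ∈ X.erase a, s = c ∨ s = c + 1) (hc : m - 2 ≤ (X.erase a).count c) :
    X.count c = m - 1 := by
  obtain ⟨k, rfl⟩ : ∃ k, m = k + 2 := ⟨m - 2, by omega⟩
  have : Fact (1 < k + 2) := ⟨by omega⟩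
  have hchar : ((k + 2 : ℕ) : ZMod (k + 2)) = 0 := ZMod.natCast_self _
  push_cast at hchar
  have hY : card (X.erase a) = k + 1 := by rw [card_erase_of_mem ha, hX]; rfl
  have hcY : (X.erase a).count c ≤ k + 1 := hY ▸ count_le_card c _
  rw [← cons_erase ha, sum_cons, sum_eq_of_forall_mem_eq_or_eq hmem, hY] at hsum
  rw [← cons_erase ha, count_cons]
  rcases (show (X.erase a).count c = k + 1 ∨ (X.erase a).count c = k by omega) with h | h
  · rw [h, Nat.sub_self, zero_smul, add_zero, nsmul_eq_mul] at hsum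
    have ha : a = c + 1 := by push_cast at hsum; linear_combination hsum - c * hchar
    have hca : c ≠ a := by rw [ha]; exact fun h => one_ne_zero (left_eq_add.mp h)
    rw [h, if_neg hca]
    omega
  · rw [h, show k + 1 - k = 1 by omega, one_smul, nsmul_eq_mul] at hsum
    have ha : a = c := by linear_combination hsum - c * hchar
    rw [h, if_pos ha.symm]
    omega

section UpsilonSeq

variable {m : ℕ} {M : Type*} [AddCommGroup M] [Module (ZMod m) M]

def upsilonSeq (k : ℕ) (e₁ e₂ : M) (X : Multiset (ZMod m)) : Multiset M :=
  replicate k e₁ + X.map fun s => s • e₁ + e₂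

theorem replicate_add_map_nsmul_eq_upsilonSeq {ι : Type*} [Fintype ι] (k : ℕ) (e₁ e₂ : M)
    (x : ι → ℕ) :
    replicate k e₁ + (Finset.univ : Finset ι).val.map (fun i => x i • e₁ + e₂) =
      upsilonSeq k e₁ e₂ ((Finset.univ : Finset ι).val.map fun i => (x i : ZMod m)) := by
  simp only [upsilonSeq, Multiset.map_map, Function.comp_def, Nat.cast_smul_eq_nsmul]

theorem sum_upsilonSeq [NeZero m] (e₁ e₂ : M) {X : Multiset (ZMod m)} (hX : card X = m) :
    (upsilonSeq (m - 1) e₁ e₂ X).sum = (X.sum - 1) • e₁ := by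
  have hpred : ((m - 1 : ℕ) : ZMod m) = -1 := by
    rw [Nat.cast_pred (Nat.pos_of_neZero m), ZMod.natCast_self, zero_sub]
  rw [upsilonSeq, sum_add, sum_replicate, sum_map_add, ← Multiset.sum_smul, map_const',
    sum_replicate, hX, ZModModule.char_nsmul_eq_zero m, add_zero,
    ← Nat.cast_smul_eq_nsmul (ZMod m), hpred, sub_eq_neg_add, add_smul]

theorem upsilonSeq_eq_add_pair {k : ℕ} (hk : k ≠ 0) (e₁ e₂ : M)
    {X : Multiset (ZMod m)} {a : ZMod m} (ha : a ∈ X) :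
    upsilonSeq k e₁ e₂ X = upsilonSeq (k - 1) e₁ e₂ (X.erase a) + {e₁, a • e₁ + e₂} := by
  obtain ⟨k, rfl⟩ := Nat.exists_eq_succ_of_ne_zero hk
  conv_lhs => rw [upsilonSeq, ← cons_erase ha, replicate_succ, map_cons]
  rw [upsilonSeq, Nat.succ_sub_one, insert_eq_cons, ← singleton_add, ← singleton_add,
    ← singleton_add]
  abel

theorem exists_eq_add_smul_of_mem_upsilonSeq {k : ℕ} {e₁ e₂ v w : M} {X : Multiset (ZMod m)}
    (hv : v ∈ upsilonSeq k e₁ e₂ X) (hw : w ∈ upsilonSeq k e₁ e₂ X) (hv₁ : v ≠ e₁)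
    (hw₁ : w ≠ e₁) : ∃ r : ZMod m, w = v + r • e₁ := by
  simp only [upsilonSeq, mem_add, mem_map] at hv hw
  obtain ⟨s, -, rfl⟩ := hv.resolve_left fun h => hv₁ (eq_of_mem_replicate h)
  obtain ⟨t, -, rfl⟩ := hw.resolve_left fun h => hw₁ (eq_of_mem_replicate h)
  exact ⟨t - s, by module⟩

end UpsilonSeq

theorem exists_upsilonSeq_of_mem_upsilon {m : ℕ} {S : Multiset (ZMod m × ZMod m)}
    (hS : S ∈ Upsilon m) :
    ∃ (e₁ e₂ : ZMod m × ZMod m) (X : Multiset (ZMod m)),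
      IsBasis e₁ e₂ ∧ card X = m ∧ X.sum = 1 ∧ S = upsilonSeq (m - 1) e₁ e₂ X := by
  obtain ⟨e₁, e₂, x, hb, -, hsum, rfl⟩ := hS
  refine ⟨e₁, e₂, _, hb, by simp, ?_, replicate_add_map_nsmul_eq_upsilonSeq _ _ _ x⟩
  change ∑ i, (x i : ZMod m) = 1
  rw [← Nat.cast_sum, ← Nat.cast_one, ZMod.natCast_eq_natCast_iff']
  exact hsum

theorem sum_eq_zero_of_mem_upsilon {m : ℕ} [NeZero m] {S : Multiset (ZMod m × ZMod m)}
    (hS : S ∈ Upsilon m) : S.sum = 0 := by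
  obtain ⟨e₁, e₂, X, -, hX, hsum, rfl⟩ := exists_upsilonSeq_of_mem_upsilon hS
  rw [sum_upsilonSeq _ _ hX, hsum, sub_self, zero_smul]

namespace IsBasis

variable {m : ℕ} {e₁ e₂ : ZMod m × ZMod m}

theorem exists_smul_add_smul (hb : IsBasis e₁ e₂) (v : ZMod m × ZMod m) :
    ∃ s t : ZMod m, s • e₁ + t • e₂ = v := by
  have hv : v ∈ AddSubgroup.zmultiples e₁ ⊔ AddSubgroup.zmultiples e₂ := hb.1 ▸ trivial
  obtain ⟨_, ⟨k, rfl⟩, _, ⟨l, rfl⟩, rfl⟩ := AddSubgroup.mem_sup.mp hv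
  exact ⟨k, l, by simp only [Int.cast_smul_eq_zsmul]⟩

section NeZero

variable [NeZero m]

theorem smul_add_smul_injective (hb : IsBasis e₁ e₂) :
    Function.Injective fun p : ZMod m × ZMod m => p.1 • e₁ + p.2 • e₂ :=
  Finite.injective_iff_surjective.mpr fun v =>
    let ⟨s, t, h⟩ := hb.exists_smul_add_smul v; ⟨(s, t), h⟩

theorem smul_add_smul_inj (hb : IsBasis e₁ e₂) {s t s' t' : ZMod m} :
    s • e₁ + t • e₂ = s' • e₁ + t' • e₂ ↔ s = s' ∧ t = t' :=
  (hb.smul_add_smul_injective.eq_iff (a := (s, t)) (b := (s', t'))).trans Prod.ext_iff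

theorem smul_add_injective (hb : IsBasis e₁ e₂) :
    Function.Injective fun s : ZMod m => s • e₁ + e₂ := fun s t h =>
  (hb.smul_add_smul_inj (t := 1) (t' := 1)).mp (by simpa only [one_smul] using h) |>.1

end NeZero

variable [Fact (1 < m)] {k : ℕ} {X : Multiset (ZMod m)}

theorem smul_add_ne (hb : IsBasis e₁ e₂) (s : ZMod m) : s • e₁ + e₂ ≠ e₁ := by
  intro h
  have h' : s • e₁ + (1 : ZMod m) • e₂ = (1 : ZMod m) • e₁ + (0 : ZMod m) • e₂ := by
    rw [one_smul, one_smul, zero_smul, add_zero, h]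
  exact one_ne_zero (hb.smul_add_smul_inj.mp h').2

theorem count_upsilonSeq_self (hb : IsBasis e₁ e₂) : (upsilonSeq k e₁ e₂ X).count e₁ = k := by
  rw [upsilonSeq, count_add, count_replicate_self, count_eq_zero.mpr, add_zero]
  simp only [mem_map, not_exists, not_and]
  exact fun s _ => hb.smul_add_ne s

theorem count_upsilonSeq_smul_add (hb : IsBasis e₁ e₂) (s : ZMod m) :
    (upsilonSeq k e₁ e₂ X).count (s • e₁ + e₂) = X.count s := by
  rw [upsilonSeq, count_add, count_replicate, if_neg (hb.smul_add_ne s).symm, zero_add,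
    count_map_eq_count' _ _ hb.smul_add_injective]

theorem sum_eq_one_of_mem_upsilon (hb : IsBasis e₁ e₂) (hX : card X = m)
    (h : upsilonSeq (m - 1) e₁ e₂ X ∈ Upsilon m) : X.sum = 1 := by
  have h0 := sum_eq_zero_of_mem_upsilon h
  rw [sum_upsilonSeq _ _ hX] at h0
  have h0' : (X.sum - 1) • e₁ + (0 : ZMod m) • e₂ = (0 : ZMod m) • e₁ + (0 : ZMod m) • e₂ := by
    rw [h0, zero_smul, zero_smul, add_zero]
  exact sub_eq_zero.mp (hb.smul_add_smul_inj.mp h0').1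

theorem mem_of_upsilonSeq_add_eq {e₂' : ZMod m × ZMod m} (hb : IsBasis e₁ e₂)
    (hb' : IsBasis e₁ e₂') {Y : Multiset (ZMod m)} {P : Multiset (ZMod m × ZMod m)}
    (h : upsilonSeq (m - 2) e₁ e₂ X + P = upsilonSeq (m - 1) e₁ e₂' Y) : e₁ ∈ P := by
  have hcount := congrArg (count e₁) h
  rw [count_add, hb.count_upsilonSeq_self, hb'.count_upsilonSeq_self] at hcount
  have hm : 1 < m := Fact.out
  exact count_pos.mp (by omega)

variable {f₁ f₂ : ZMod m × ZMod m}

theorem eq_or_eq_add_one_of_mem_upsilonSeq (hb : IsBasis f₁ f₂) {c s : ZMod m}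
    {Y : Multiset (ZMod m)}
    (hf₁ : f₁ ∈ upsilonSeq k (c • f₁ + f₂) e₂ Y)
    (hs : s • f₁ + f₂ ∈ upsilonSeq k (c • f₁ + f₂) e₂ Y) : s = c ∨ s = c + 1 := by
  by_cases hsc : s • f₁ + f₂ = c • f₁ + f₂
  · exact Or.inl (hb.smul_add_injective hsc)
  obtain ⟨r, hr⟩ := exists_eq_add_smul_of_mem_upsilonSeq hf₁ hs (hb.smul_add_ne c).symm hsc
  have h : s • f₁ + (1 : ZMod m) • f₂ = (1 + r * c) • f₁ + r • f₂ := by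
    rw [one_smul, hr]
    module
  obtain ⟨hs, hr⟩ := hb.smul_add_smul_inj.mp h
  right
  rw [hs, ← hr]
  ring

theorem exists_count_eq_pred_of_ne (hm : 4 ≤ m) (hf : IsBasis f₁ f₂) (he : IsBasis e₁ e₂)
    (hne : e₁ ≠ f₁) {Y : Multiset (ZMod m)} (hX : card X = m) (hXsum : X.sum = 1) {a : ZMod m} (ha : a ∈ X)
    {g : ZMod m × ZMod m}
    (hS' : upsilonSeq (m - 2) f₁ f₂ (X.erase a) + {f₁ + g, a • f₁ + f₂ - g} =
      upsilonSeq (m - 1) e₁ e₂ Y) :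
    ∃ c, e₁ = c • f₁ + f₂ ∧ X.count c = m - 1 := by
  set R := upsilonSeq (m - 2) f₁ f₂ (X.erase a)
  have hcount : R.count e₁ + count e₁ {f₁ + g, a • f₁ + f₂ - g} = m - 1 := by
    rw [← count_add, hS', he.count_upsilonSeq_self]
  have hpair : count e₁ {f₁ + g, a • f₁ + f₂ - g} ≤ 2 := count_le_card _ _
  obtain ⟨c, hc, rfl⟩ : ∃ c ∈ X.erase a, c • f₁ + f₂ = e₁ := by
    have hR : e₁ ∈ R := count_pos.mp (by omega)
    simpa only [R, upsilonSeq, mem_add, mem_map, mem_replicate, hne, and_false, false_or]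
      using hR
  have hpair' : count (c • f₁ + f₂) {f₁ + g, a • f₁ + f₂ - g} ≤ 1 := by
    have hboth : ¬(c • f₁ + f₂ = f₁ + g ∧ c • f₁ + f₂ = a • f₁ + f₂ - g) := by
      rintro ⟨h₁, h₂⟩
      have h : (1 + a) • f₁ + (1 : ZMod m) • f₂ = (c + c) • f₁ + (1 + 1 : ZMod m) • f₂ := by
        calc _ = (f₁ + g) + (a • f₁ + f₂ - g) := by module
          _ = _ := by rw [← h₁, ← h₂]; module
      exact one_ne_zero (left_eq_add.mp (hf.smul_add_smul_inj.mp h).2)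
    rw [insert_eq_cons, count_cons, count_singleton]
    split_ifs <;> simp_all
  refine ⟨c, rfl, count_eq_pred_of_forall_mem_erase (by omega) hX hXsum ha ?_ ?_⟩
  · have hf₁ : f₁ ∈ R := mem_add.mpr (Or.inl (mem_replicate.mpr ⟨by omega, rfl⟩))
    intro s hs
    have hsR : s • f₁ + f₂ ∈ R := mem_add.mpr (Or.inr (mem_map_of_mem _ hs))
    exact hf.eq_or_eq_add_one_of_mem_upsilonSeq (hS' ▸ mem_add.mpr (Or.inl hf₁))
      (hS' ▸ mem_add.mpr (Or.inl hsR))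
  · rw [hf.count_upsilonSeq_smul_add] at hcount
    omega

end IsBasis

theorem stmt_1_general (m : ℕ) (hm : 4 ≤ m) (g f₁ f₂ : ZMod m × ZMod m)
    (x : Fin m → ℕ) (hbasis : IsBasis f₁ f₂)
    (S : Multiset (ZMod m × ZMod m))
    (hS : S = Multiset.replicate (m - 1) f₁ +
        Multiset.map (fun i => x i • f₁ + f₂) (Finset.univ : Finset (Fin m)).val)
    (hSU : S ∈ UpsilonU m)
    (j : Fin m)
    (S' : Multiset (ZMod m × ZMod m))
    (hS' : S' = (S - {f₁, x j • f₁ + f₂}) + {f₁ + g, x j • f₁ + f₂ - g})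
    (hS'U : S' ∈ Upsilon m) :
    (g = 0 ∨ g = ((x j : ℤ) - 1) • f₁ + f₂) ∧ S' = S := by
  have : Fact (1 < m) := ⟨by omega⟩
  obtain ⟨hSΥ, hSuniq⟩ := hSU
  set X : Multiset (ZMod m) := (Finset.univ : Finset (Fin m)).val.map fun i => (x i : ZMod m)
  set a : ZMod m := (x j : ZMod m)
  have hX : card X = m := by simp [X]
  have ha : a ∈ X := mem_map_of_mem _ (Finset.mem_univ j)
  rw [replicate_add_map_nsmul_eq_upsilonSeq (m := m)] at hS
  rw [← Nat.cast_smul_eq_nsmul (ZMod m)] at hS'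
  have hXsum : X.sum = 1 := hbasis.sum_eq_one_of_mem_upsilon hX (hS ▸ hSΥ)
  set R := upsilonSeq (m - 2) f₁ f₂ (X.erase a)
  have hSR : S = R + {f₁, a • f₁ + f₂} := hS.trans (upsilonSeq_eq_add_pair (by omega) f₁ f₂ ha)
  have hS'R : S' = R + {f₁ + g, a • f₁ + f₂ - g} := by rw [hS', hSR, add_tsub_cancel_right]
  obtain ⟨e₁, e₂, Y, he, -, -, hS'e⟩ := exists_upsilonSeq_of_mem_upsilon hS'U
  have he₁ : e₁ = f₁ := by
    by_contra hne
    obtain ⟨c, rfl, hc⟩ := hbasis.exists_count_eq_pred_of_ne hm he hne hX hXsum ha (hS'R ▸ hS'e)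
    refine hne (hSuniq.unique ?_ ?_) <;> rw [hS]
    · rw [hbasis.count_upsilonSeq_smul_add, hc]
    · rw [hbasis.count_upsilonSeq_self]
  rw [he₁] at he hS'e
  obtain ⟨hg, hpair⟩ :=
    eq_zero_or_eq_sub_of_mem_pair (hbasis.mem_of_upsilonSeq_add_eq he (hS'R.symm.trans hS'e))
  refine ⟨hg.imp_right fun h => ?_, by rw [hS'R, hpair, hSR]⟩
  rw [h, sub_smul, one_smul, ← Int.cast_smul_eq_zsmul (ZMod m), Int.cast_natCast]
  abel

theorem stmt_1 (m : ℕ) (hm : 4 ≤ m) (g f₁ f₂ : ZMod m × ZMod m)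
    (x : Fin m → ℕ) (hx : ∀ i, x i ≤ m - 1) (hbasis : IsBasis f₁ f₂)
    (S : Multiset (ZMod m × ZMod m))
    (hS : S = Multiset.replicate (m - 1) f₁ +
        Multiset.map (fun i => x i • f₁ + f₂) (Finset.univ : Finset (Fin m)).val)
    (hSU : S ∈ UpsilonU m)
    (j : Fin m)
    (S' : Multiset (ZMod m × ZMod m))
    (hS' : S' = (S - {f₁, x j • f₁ + f₂}) + {f₁ + g, x j • f₁ + f₂ - g})
    (hS'U : S' ∈ Upsilon m) :
    (g = 0 ∨ g = ((x j : ℤ) - 1) • f₁ + f₂) ∧ S' = S :=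
  stmt_1_general m hm g f₁ f₂ x hbasis S hS hSU j S' hS' hS'U
end

section
/- Let m ≥ 4, let G = (ℤ/mℤ)², let g ∈ G, and let S = f₁^[m−1] · ∏_{i=1}^{m} (x_i f₁ + f₂) ∈ Υ_u(G), where (f₁,f₂) is a basis of G and x₁,…,x_m ∈ [0,m−1]. If, for some distinct j, k ∈ [1,m], S' = (x_j f₁ + f₂)^[−1] · (x_k f₁ + f₂)^[−1] · S · (x_j f₁ + f₂ + g) · (x_k f₁ + f₂ − g) ∈ Υ(G), then g ∈ ⟨f₁⟩. -/
/-! If `S' ∈ Υ(G)` with respect to a basis `(e₁, e₂)`, then `e₁` has multiplicity exactly `m - 1`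
in `S'` and every other term of `S'` lies in the coset `e₂ + ⟨e₁⟩`. If `e₁ = f₁`, the `m - 2 ≥ 1`
untouched terms `xᵢf₁ + f₂` and the new term `x_j f₁ + f₂ + g` all lie in `e₂ + ⟨f₁⟩`, which is
therefore `f₂ + ⟨f₁⟩`. If `e₁ ≠ f₁`, its `m - 1` copies come from the `m - 2` untouched terms and
the two new ones, so `e₁` is both some `xᵢf₁ + f₂` and one of `x_j f₁ + f₂ + g`, `x_k f₁ + f₂ - g`.
-/

open AddSubgroup QuotientAddGroup

theorem IsBasis.notMem_zmultiples {m : ℕ} (hm : 1 < m) {e₁ e₂ : ZMod m × ZMod m}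
    (h : IsBasis e₁ e₂) : e₂ ∉ zmultiples e₁ := by
  intro he₂
  have : NeZero m := ⟨by omega⟩
  have htop : zmultiples e₁ = ⊤ := by
    rw [← h.1, sup_eq_left.mpr (zmultiples_le_of_mem he₂)]
  have : IsAddCyclic (ZMod m × ZMod m) :=
    isAddCyclic_iff_exists_zmultiples_eq_top.mpr ⟨e₁, htop⟩
  have hcop := coprime_card_of_isAddCyclic_prod (ZMod m) (ZMod m)
  rw [Nat.card_zmod, Nat.coprime_self] at hcop
  omega

section Coset

variable {G ι : Type*} [AddCommGroup G] [Fintype ι]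

theorem mk_nsmul_add_self (e v : G) (n : ℕ) : ((n • e + v : G) : G ⧸ zmultiples e) = v := by
  rw [mk_add, mk_nsmul, (eq_zero_iff e).mpr (mem_zmultiples e), smul_zero, zero_add]

theorem coe_eq_of_mem_map_nsmul_add {e₁ e₂ u : G} {x : ι → ℕ}
    (hu : u ∈ (Finset.univ : Finset ι).val.map fun i => x i • e₁ + e₂) :
    (u : G ⧸ zmultiples e₁) = e₂ := by
  obtain ⟨i, -, rfl⟩ := Multiset.mem_map.mp hu
  exact mk_nsmul_add_self e₁ e₂ (x i)

theorem notMem_map_nsmul_add {e₁ e₂ : G} (he : e₂ ∉ zmultiples e₁) (x : ι → ℕ) :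
    e₁ ∉ (Finset.univ : Finset ι).val.map fun i => x i • e₁ + e₂ := fun h =>
  he <| (eq_zero_iff e₂).mp <|
    (coe_eq_of_mem_map_nsmul_add h).symm.trans ((eq_zero_iff e₁).mpr (mem_zmultiples e₁))

end Coset

theorem exists_count_eq_of_mem_upsilon {m : ℕ} (hm : 1 < m) {S : Multiset (ZMod m × ZMod m)}
    (hS : S ∈ Upsilon m) :
    ∃ e₁ e₂ : ZMod m × ZMod m, S.count e₁ = m - 1 ∧
      ∀ u ∈ S, u ≠ e₁ → (u : (ZMod m × ZMod m) ⧸ zmultiples e₁) = e₂ := by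
  classical
  obtain ⟨e₁, e₂, x, hbasis, -, -, rfl⟩ := hS
  refine ⟨e₁, e₂, ?_, fun u hu hne => ?_⟩
  · rw [Multiset.count_add, Multiset.count_replicate_self,
      Multiset.count_eq_zero.mpr (notMem_map_nsmul_add (hbasis.notMem_zmultiples hm) x), add_zero]
  · rcases Multiset.mem_add.mp hu with h | h
    · exact absurd (Multiset.eq_of_mem_replicate h) hne
    · exact coe_eq_of_mem_map_nsmul_add h

theorem Multiset.pair_le_map_univ {ι α : Type*} [Fintype ι] (f : ι → α) {j k : ι} (hjk : j ≠ k) :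
    {f j, f k} ≤ (Finset.univ : Finset ι).val.map f := by
  classical
  have hle : ({j, k} : Finset ι).val ≤ Finset.univ.val :=
    Finset.val_le_iff.mpr (Finset.subset_univ _)
  simpa [Finset.insert_val_of_notMem (Finset.notMem_singleton.mpr hjk)] using
    Multiset.map_le_map (f := f) hle

section Exchange

variable {G : Type*} [AddCommGroup G] [DecidableEq G]

theorem mem_zmultiples_of_count_eq {m : ℕ} (hm : 4 ≤ m) {f₁ f₂ a b g e₁ e₂ : G}
    {R : Multiset G} (hR : ∀ r ∈ R, (r : G ⧸ zmultiples f₁) = f₂) (hcard : R.card = m - 2)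
    (ha : (a : G ⧸ zmultiples f₁) = f₂) (hb : (b : G ⧸ zmultiples f₁) = f₂)
    (hcount : (Multiset.replicate (m - 1) f₁ + R + {a + g, b - g}).count e₁ = m - 1)
    (hcoset : ∀ u ∈ Multiset.replicate (m - 1) f₁ + R + {a + g, b - g}, u ≠ e₁ →
      (u : G ⧸ zmultiples e₁) = e₂) :
    g ∈ zmultiples f₁ := by
  rw [← eq_zero_iff]
  rw [Multiset.count_add, Multiset.count_add, Multiset.count_replicate] at hcount
  by_cases hef : f₁ = e₁
  · subst hef
    rw [if_pos rfl] at hcount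
    obtain ⟨o, ho⟩ := Multiset.card_pos_iff_exists_mem.mp (show 0 < R.card by omega)
    have hoe := hcoset o (by simp [ho]) fun h => by
      have := Multiset.count_pos.mpr (h ▸ ho); omega
    have hage := hcoset (a + g) (by simp) fun h => by
      have := Multiset.count_pos.mpr (show f₁ ∈ ({a + g, b - g} : Multiset G) by simp [← h])
      omega
    rw [hR o ho] at hoe
    rw [mk_add, ha, ← hoe] at hage
    simpa using hage
  · rw [if_neg hef, zero_add] at hcount
    have hRle := Multiset.count_le_card e₁ R
    have hPle : ({a + g, b - g} : Multiset G).count e₁ ≤ 2 :=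
      (Multiset.count_le_card _ _).trans (by simp)
    have heR : (e₁ : G ⧸ zmultiples f₁) = f₂ := hR e₁ (Multiset.count_pos.mp (by omega))
    have heP : e₁ ∈ ({a + g, b - g} : Multiset G) := Multiset.count_pos.mp (by omega)
    simp only [Multiset.insert_eq_cons, Multiset.mem_cons, Multiset.mem_singleton] at heP
    rcases heP with rfl | rfl
    · rw [mk_add, ha] at heR
      simpa using heR
    · rw [mk_sub, hb] at heR
      simpa using heR

end Exchange

theorem stmt_2_general (m : ℕ) (hm : 4 ≤ m) (g f₁ f₂ : ZMod m × ZMod m)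
    (x : Fin m → ℕ)
    (S : Multiset (ZMod m × ZMod m))
    (hS : S = Multiset.replicate (m - 1) f₁ +
        Multiset.map (fun i => x i • f₁ + f₂) (Finset.univ : Finset (Fin m)).val)
    (j k : Fin m) (hjk : j ≠ k)
    (S' : Multiset (ZMod m × ZMod m))
    (hS' : S' = (S - {x j • f₁ + f₂, x k • f₁ + f₂}) +
        {x j • f₁ + f₂ + g, x k • f₁ + f₂ - g})
    (hS'U : S' ∈ Upsilon m) :
    g ∈ AddSubgroup.zmultiples f₁ := by
  classical
  obtain ⟨e₁, e₂, hcount, hcoset⟩ := exists_count_eq_of_mem_upsilon (by omega) hS'U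
  have hpair := Multiset.pair_le_map_univ (fun i => x i • f₁ + f₂) hjk
  rw [hS', hS, add_tsub_assoc_of_le hpair] at hcount hcoset
  refine mem_zmultiples_of_count_eq hm
    (fun r hr => coe_eq_of_mem_map_nsmul_add (Multiset.mem_of_le tsub_le_self hr)) ?_
    (mk_nsmul_add_self _ _ _) (mk_nsmul_add_self _ _ _) hcount hcoset
  rw [Multiset.card_sub hpair]
  simp

theorem stmt_2 (m : ℕ) (hm : 4 ≤ m) (g f₁ f₂ : ZMod m × ZMod m)
    (x : Fin m → ℕ) (hx : ∀ i, x i ≤ m - 1) (hbasis : IsBasis f₁ f₂)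
    (S : Multiset (ZMod m × ZMod m))
    (hS : S = Multiset.replicate (m - 1) f₁ +
        Multiset.map (fun i => x i • f₁ + f₂) (Finset.univ : Finset (Fin m)).val)
    (hSU : S ∈ UpsilonU m)
    (j k : Fin m) (hjk : j ≠ k)
    (S' : Multiset (ZMod m × ZMod m))
    (hS' : S' = (S - {x j • f₁ + f₂, x k • f₁ + f₂}) +
        {x j • f₁ + f₂ + g, x k • f₁ + f₂ - g})
    (hS'U : S' ∈ Upsilon m) :
    g ∈ AddSubgroup.zmultiples f₁ :=
  stmt_2_general m hm g f₁ f₂ x S hS j k hjk S' hS' hS'U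
end

section
/- Let m ≥ 4, let G = (ℤ/mℤ)², let g ∈ G, and let S = f₁^[m−1] · f₂^[m−1] · (f₁+f₂) ∈ Υ_nu(G), where (f₁,f₂) is a basis of G. If S' = f₁^[−2] · S · (f₁+g) · (f₁−g) ∈ Υ(G), then g ∈ ⟨f₂⟩. -/
/-! Write `S' ∈ Υ(G)` with basis `(e₁, e₂)`: the term `e₁` occurs exactly `m - 1` times, `|S'| = 2m - 1`,
and all other terms lie in the coset `e₂ + ⟨e₁⟩`, so any two of them differ by a multiple of `e₁`.
If `e₁ = f₂`, the terms `f₁` and `f₁ + g` give `g ∈ ⟨f₂⟩`. Otherwise `e₁`, `f₁`, `f₂` are distinct and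
occur `(m - 1) + (m - 3) + (m - 1) ≥ 2m - 1` times in total, so they exhaust `S'`; this forces
`f₁ + f₂ = e₁ = f₁ + g`, i.e. `g = f₂`. -/

lemma IsBasis.symm {G : Type*} [AddCommGroup G] {e₁ e₂ : G} (h : IsBasis e₁ e₂) :
    IsBasis e₂ e₁ :=
  ⟨(sup_comm _ _).trans h.1, (inf_comm _ _).trans h.2⟩

lemma IsBasis.notMem_zmultiples_s3 {G : Type*} [AddCommGroup G] (hG : ¬IsAddCyclic G) {e₁ e₂ : G}
    (h : IsBasis e₁ e₂) : e₂ ∉ AddSubgroup.zmultiples e₁ := by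
  intro he
  have htop : AddSubgroup.zmultiples e₁ = ⊤ := by
    rw [← h.1, left_eq_sup, AddSubgroup.zmultiples_le]
    exact he
  exact hG (isAddCyclic_iff_exists_zmultiples_eq_top.mpr ⟨e₁, htop⟩)

lemma ZMod.not_isAddCyclic_prod_self {m : ℕ} (hm : m ≠ 1) : ¬IsAddCyclic (ZMod m × ZMod m) := by
  simp [AddGroup.isAddCyclic_prod_iff, Nat.card_zmod, Nat.coprime_self, hm]

lemma Multiset.sum_count_le_card {α : Type*} [DecidableEq α] (t : Finset α) (s : Multiset α) :
    ∑ a ∈ t, s.count a ≤ Multiset.card s :=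
  calc ∑ a ∈ t, s.count a ≤ ∑ a ∈ t ∪ s.toFinset, s.count a :=
        Finset.sum_le_sum_of_subset Finset.subset_union_left
    _ = Multiset.card s := Multiset.sum_count_eq_card fun a ha ↦ by simp [ha]

lemma Multiset.mem_of_card_le_sum_count {α : Type*} [DecidableEq α] {t : Finset α}
    {s : Multiset α} (h : Multiset.card s ≤ ∑ a ∈ t, s.count a) {v : α} (hv : v ∈ s) : v ∈ t := by
  by_contra hvt
  have := Multiset.sum_count_le_card (insert v t) s
  rw [Finset.sum_insert hvt] at this
  have := Multiset.count_pos.mpr hv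
  omega

lemma exists_count_eq_and_sub_mem_zmultiples_of_mem_Upsilon {m : ℕ} (hm : m ≠ 1)
    {T : Multiset (ZMod m × ZMod m)} (hT : T ∈ Upsilon m) :
    ∃ e, Multiset.card T = 2 * m - 1 ∧ T.count e = m - 1 ∧
      ∀ u ∈ T, ∀ v ∈ T, u ≠ e → v ≠ e → u - v ∈ AddSubgroup.zmultiples e := by
  obtain ⟨e₁, e₂, x, hb, -, -, hT⟩ := hT
  have hne (i : Fin m) : x i • e₁ + e₂ ≠ e₁ := fun h ↦
    hb.notMem_zmultiples_s3 (ZMod.not_isAddCyclic_prod_self hm) <| eq_sub_of_add_eq' h ▸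
      sub_mem (AddSubgroup.mem_zmultiples e₁) (nsmul_mem (AddSubgroup.mem_zmultiples e₁) _)
  have hcoset (v) (hv : v ∈ T) (hve : v ≠ e₁) : v - e₂ ∈ AddSubgroup.zmultiples e₁ := by
    rw [hT, Multiset.mem_add] at hv
    rcases hv with hv | hv
    · exact absurd (Multiset.eq_of_mem_replicate hv) hve
    · obtain ⟨i, -, rfl⟩ := Multiset.mem_map.mp hv
      rw [add_sub_cancel_right]
      exact nsmul_mem (AddSubgroup.mem_zmultiples e₁) _
  refine ⟨e₁, by simp [hT]; omega, ?_, fun u hu v hv hue hve ↦ ?_⟩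
  · rw [hT, Multiset.count_add, Multiset.count_replicate_self, add_eq_left, Multiset.count_eq_zero]
    intro hmem
    obtain ⟨i, -, hi⟩ := Multiset.mem_map.mp hmem
    exact hne i hi
  · simpa using sub_mem (hcoset u hu hue) (hcoset v hv hve)

lemma mem_zmultiples_of_mem_Upsilon {m : ℕ} (hm : 4 ≤ m) {f₁ f₂ g : ZMod m × ZMod m}
    (hbasis : IsBasis f₁ f₂) (hg : g ≠ 0)
    (hT : Multiset.replicate (m - 3) f₁ + Multiset.replicate (m - 1) f₂ +
      {f₁ + f₂} + {f₁ + g, f₁ - g} ∈ Upsilon m) :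
    g ∈ AddSubgroup.zmultiples f₂ := by
  set T := Multiset.replicate (m - 3) f₁ + Multiset.replicate (m - 1) f₂ + {f₁ + f₂} +
    {f₁ + g, f₁ - g}
  have hnc := ZMod.not_isAddCyclic_prod_self (m := m) (by omega)
  have hf₁ : f₁ ≠ 0 := fun h ↦ hbasis.symm.notMem_zmultiples_s3 hnc (h ▸ zero_mem _)
  have hf₂ : f₂ ≠ 0 := fun h ↦ hbasis.notMem_zmultiples_s3 hnc (h ▸ zero_mem _)
  have hf₁₂ : f₁ ≠ f₂ := fun h ↦ hbasis.notMem_zmultiples_s3 hnc (h ▸ AddSubgroup.mem_zmultiples f₁)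
  have hcf₁ : T.count f₁ = m - 3 := by
    simp [T, Multiset.count_replicate, hf₁₂.symm, hf₂, hg, eq_sub_iff_add_eq]
  have hcf₂ : T.count f₂ = m - 1 + ({f₁ + g, f₁ - g} : Multiset _).count f₂ := by
    simp [T, Multiset.count_replicate, Multiset.count_cons, hf₁₂, hf₁, add_assoc]
  have hf₁g (h : T.count f₂ = m - 1) : f₁ + g ≠ f₂ := by
    have : f₂ ∉ ({f₁ + g, f₁ - g} : Multiset _) := Multiset.count_eq_zero.mp (by omega)
    exact fun h' ↦ this (by simp [h'])
  have hmem : f₁ ∈ T ∧ f₁ + f₂ ∈ T ∧ f₁ + g ∈ T := by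
    simp [T, Multiset.mem_replicate]
    omega
  obtain ⟨e, hcard, hce, hsub⟩ :=
    exists_count_eq_and_sub_mem_zmultiples_of_mem_Upsilon (by omega) hT
  by_cases hfe : f₂ = e
  · subst hfe
    simpa using hsub _ hmem.2.2 _ hmem.1 (hf₁g hce) hf₁₂
  have hef₁ : e ≠ f₁ := fun h ↦ by rw [h, hcf₁] at hce; omega
  have hsum : ∑ a ∈ {e, f₁, f₂}, T.count a = T.count e + T.count f₁ + T.count f₂ := by
    rw [Finset.sum_insert (by simp [hef₁, Ne.symm hfe]), Finset.sum_pair hf₁₂, add_assoc]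
  have hle := Multiset.sum_count_le_card {e, f₁, f₂} T
  have hc₂ : T.count f₂ = m - 1 := by omega
  have hall (v : ZMod m × ZMod m) (hv : v ∈ T) : v = e ∨ v = f₁ ∨ v = f₂ := by
    simpa using Multiset.mem_of_card_le_sum_count (t := {e, f₁, f₂}) (by omega) hv
  have h₁ : f₁ + f₂ = e := by simpa [hf₁, hf₂] using hall _ hmem.2.1
  have h₂ : f₁ + g = e := by simpa [hg, hf₁g hc₂] using hall _ hmem.2.2
  exact add_left_cancel (h₂.trans h₁.symm) ▸ AddSubgroup.mem_zmultiples f₂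

theorem stmt_3_general (m : ℕ) (hm : 4 ≤ m) (g f₁ f₂ : ZMod m × ZMod m)
    (hbasis : IsBasis f₁ f₂)
    (S : Multiset (ZMod m × ZMod m))
    (hS : S = Multiset.replicate (m - 1) f₁ + Multiset.replicate (m - 1) f₂ + {f₁ + f₂})
    (S' : Multiset (ZMod m × ZMod m))
    (hS' : S' = (S - Multiset.replicate 2 f₁) + {f₁ + g, f₁ - g})
    (hS'U : S' ∈ Upsilon m) :
    g ∈ AddSubgroup.zmultiples f₂ := by
  rcases eq_or_ne g 0 with rfl | hg
  · exact zero_mem _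
  have hsplit : Multiset.replicate (m - 1) f₁ =
      Multiset.replicate (m - 3) f₁ + Multiset.replicate 2 f₁ := by
    rw [← Multiset.replicate_add]
    congr 1
    omega
  have hS'eq : S' = Multiset.replicate (m - 3) f₁ + Multiset.replicate (m - 1) f₂ +
      {f₁ + f₂} + {f₁ + g, f₁ - g} := by
    rw [hS', hS, hsplit, add_right_comm _ (Multiset.replicate 2 f₁),
      add_right_comm _ (Multiset.replicate 2 f₁), add_tsub_cancel_right]
  exact mem_zmultiples_of_mem_Upsilon hm hbasis hg (hS'eq ▸ hS'U)

theorem stmt_3 (m : ℕ) (hm : 4 ≤ m) (g f₁ f₂ : ZMod m × ZMod m)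
    (hbasis : IsBasis f₁ f₂)
    (S : Multiset (ZMod m × ZMod m))
    (hS : S = Multiset.replicate (m - 1) f₁ + Multiset.replicate (m - 1) f₂ + {f₁ + f₂})
    (hSNU : S ∈ UpsilonNU m)
    (S' : Multiset (ZMod m × ZMod m))
    (hS' : S' = (S - Multiset.replicate 2 f₁) + {f₁ + g, f₁ - g})
    (hS'U : S' ∈ Upsilon m) :
    g ∈ AddSubgroup.zmultiples f₂ :=
  stmt_3_general m hm g f₁ f₂ hbasis S hS S' hS' hS'U
end

section
/- Let m ≥ 4, let G = (ℤ/mℤ)², let g ∈ G, and let S = f₁^[m−1] · f₂^[m−1] · (f₁+f₂) ∈ Υ_nu(G), where (f₁,f₂) is a basis of G. If S' = f₁^[−1] · f₂^[−1] · S · (f₁+g) · (f₂−g) ∈ Υ(G), then g ∈ {0, −f₁+f₂} and S' = S. -/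
open Multiset

section Multiplicity

variable {α : Type*}

theorem Multiset.replicate_succ_add_replicate_succ_add (n : ℕ) (a b : α) (s : Multiset α) :
    replicate (n + 1) a + replicate (n + 1) b + s =
      {a, b} + (replicate n a + replicate n b + s) := by
  rw [replicate_succ, replicate_succ, insert_eq_cons, ← singleton_add, ← singleton_add,
    ← singleton_add]
  abel

variable [DecidableEq α]

theorem Multiset.eq_of_three_le_count_triple {x c d e : α} (h : 3 ≤ count x {c, d, e}) :
    c = d ∧ c = e := by
  simp only [insert_eq_cons, count_cons, count_singleton] at h
  split_ifs at h <;> first | omega | (subst_vars; exact ⟨rfl, rfl⟩)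

theorem Multiset.mem_triple_of_lt_count {n : ℕ} {x a b c d e : α} (hn : 2 ≤ n) (hab : a ≠ b)
    (h : n < count x (replicate n a + replicate n b + {c} + {d, e})) :
    a ∈ ({c, d, e} : Multiset α) ∨ b ∈ ({c, d, e} : Multiset α) ∨ (c = d ∧ c = e) := by
  rw [add_assoc, singleton_add, ← insert_eq_cons, count_add, count_add, count_replicate,
    count_replicate] at h
  obtain rfl | hxa := eq_or_ne a x
  · rw [if_pos rfl, if_neg hab.symm] at h
    exact .inl (count_pos.mp (by omega))
  obtain rfl | hxb := eq_or_ne b x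
  · rw [if_neg hxa, if_pos rfl] at h
    exact .inr (.inl (count_pos.mp (by omega)))
  rw [if_neg hxa, if_neg hxb] at h
  exact .inr (.inr (eq_of_three_le_count_triple (by omega : 3 ≤ count x {c, d, e})))

end Multiplicity

section Basis

variable {m : ℕ} {f₁ f₂ : ZMod m × ZMod m}

theorem IsBasis.surjective (h : IsBasis f₁ f₂) :
    Function.Surjective fun p : ZMod m × ZMod m => p.1 • f₁ + p.2 • f₂ := by
  intro x
  obtain ⟨y, hy, z, hz, rfl⟩ := AddSubgroup.mem_sup.mp (h.1 ▸ AddSubgroup.mem_top x)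
  obtain ⟨k, rfl⟩ := AddSubgroup.mem_zmultiples_iff.mp hy
  obtain ⟨l, rfl⟩ := AddSubgroup.mem_zmultiples_iff.mp hz
  exact ⟨(k, l), by simp only [Int.cast_smul_eq_zsmul]⟩

theorem IsBasis.eq_zero_of_smul_add_smul_eq_zero [NeZero m] (h : IsBasis f₁ f₂) {a b : ZMod m}
    (hab : a • f₁ + b • f₂ = 0) : a = 0 ∧ b = 0 :=
  Prod.ext_iff.mp <| Finite.injective_iff_surjective.mpr h.surjective
    (a₁ := (a, b)) (a₂ := (0, 0)) (by simpa using hab)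

variable [Fact (1 < m)]

theorem IsBasis.left_ne_zero (h : IsBasis f₁ f₂) : f₁ ≠ 0 := fun h₁ =>
  one_ne_zero (h.eq_zero_of_smul_add_smul_eq_zero (a := 1) (b := 0) (by simp [h₁])).1

theorem IsBasis.right_ne_zero (h : IsBasis f₁ f₂) : f₂ ≠ 0 := fun h₂ =>
  one_ne_zero (h.eq_zero_of_smul_add_smul_eq_zero (a := 0) (b := 1) (by simp [h₂])).2

theorem IsBasis.add_ne_zero (h : IsBasis f₁ f₂) : f₁ + f₂ ≠ 0 := fun h₁₂ =>
  one_ne_zero (h.eq_zero_of_smul_add_smul_eq_zero (a := 1) (b := 1) (by simpa using h₁₂)).1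

theorem IsBasis.ne (h : IsBasis f₁ f₂) : f₁ ≠ f₂ := fun h₁₂ =>
  one_ne_zero (h.eq_zero_of_smul_add_smul_eq_zero (a := 1) (b := -1) (by simp [h₁₂])).1

end Basis

theorem exists_le_count_of_mem_upsilon {m : ℕ} {S : Multiset (ZMod m × ZMod m)}
    (hS : S ∈ Upsilon m) :
    ∃ e, m - 1 ≤ S.count e := by
  obtain ⟨e, -, -, -, -, -, rfl⟩ := hS
  exact ⟨e, by simp⟩

theorem eq_zero_or_eq_neg_add_of_lt_count {G : Type*} [AddCommGroup G] [DecidableEq G] {n : ℕ}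
    {f₁ f₂ g x : G} (hn : 2 ≤ n) (h₁ : f₁ ≠ 0) (h₂ : f₂ ≠ 0) (h₁₂ : f₁ + f₂ ≠ 0) (hne : f₁ ≠ f₂)
    (h : n < count x (replicate n f₁ + replicate n f₂ + {f₁ + f₂} + {f₁ + g, f₂ - g})) :
    g = 0 ∨ g = -f₁ + f₂ := by
  have := mem_triple_of_lt_count hn hne h
  simp only [insert_eq_cons, mem_cons, mem_singleton] at this
  grind

theorem stmt_5_general (m : ℕ) (hm : 4 ≤ m) (g f₁ f₂ : ZMod m × ZMod m)
    (hbasis : IsBasis f₁ f₂)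
    (S : Multiset (ZMod m × ZMod m))
    (hS : S = Multiset.replicate (m - 1) f₁ + Multiset.replicate (m - 1) f₂ + {f₁ + f₂})
    (S' : Multiset (ZMod m × ZMod m))
    (hS' : S' = (S - {f₁, f₂}) + {f₁ + g, f₂ - g})
    (hS'U : S' ∈ Upsilon m) :
    (g = 0 ∨ g = -f₁ + f₂) ∧ S' = S := by
  have : Fact (1 < m) := ⟨by omega⟩
  obtain ⟨n, rfl⟩ : ∃ n, m = n + 2 := ⟨m - 2, by omega⟩
  set T := replicate n f₁ + replicate n f₂ + {f₁ + f₂}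
  replace hS : S = {f₁, f₂} + T := by
    rw [hS, show n + 2 - 1 = n + 1 by omega, replicate_succ_add_replicate_succ_add]
  replace hS' : S' = T + {f₁ + g, f₂ - g} := by rw [hS', hS, add_tsub_cancel_left]
  obtain ⟨e, he⟩ := exists_le_count_of_mem_upsilon hS'U
  have hg : g = 0 ∨ g = -f₁ + f₂ :=
    eq_zero_or_eq_neg_add_of_lt_count (n := n) (x := e) (by omega) hbasis.left_ne_zero
      hbasis.right_ne_zero hbasis.add_ne_zero hbasis.ne (by rw [← hS']; omega)
  have hpair : ({f₁ + g, f₂ - g} : Multiset _) = {f₁, f₂} := by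
    rcases hg with rfl | rfl
    · simp
    · rw [add_neg_cancel_left, show f₂ - (-f₁ + f₂) = f₁ by abel, pair_comm]
  exact ⟨hg, by rw [hS', hS, hpair]; exact add_comm _ _⟩

theorem stmt_5 (m : ℕ) (hm : 4 ≤ m) (g f₁ f₂ : ZMod m × ZMod m)
    (hbasis : IsBasis f₁ f₂)
    (S : Multiset (ZMod m × ZMod m))
    (hS : S = Multiset.replicate (m - 1) f₁ + Multiset.replicate (m - 1) f₂ + {f₁ + f₂})
    (hSNU : S ∈ UpsilonNU m)
    (S' : Multiset (ZMod m × ZMod m))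
    (hS' : S' = (S - {f₁, f₂}) + {f₁ + g, f₂ - g})
    (hS'U : S' ∈ Upsilon m) :
    (g = 0 ∨ g = -f₁ + f₂) ∧ S' = S :=
  stmt_5_general m hm g f₁ f₂ hbasis S hS S' hS' hS'U
end

section
/- Let m ≥ 4, let G = (ℤ/mℤ)², let g ∈ G, and let S = f₁^[m−1] · f₂^[m−1] · (f₁+f₂) ∈ Υ_nu(G), where (f₁,f₂) is a basis of G. If S' = f₁^[−1] · (f₁+f₂)^[−1] · S · (f₁+g) · (f₁+f₂−g) ∈ Υ(G), then g ∈ ⟨f₂⟩. -/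
/-!
Write `S' = e₁^[m-1] · M` as a member of `Υ(G)`. Since `e₂ ∉ ⟨e₁⟩`, the term `e₁` does not occur
in `M` and any two terms of `M` differ by a multiple of `e₁`. Now `e₁` has multiplicity `m - 1 ≥ 3`
in `S' = f₁^[m-2] · f₂^[m-1] · (f₁+g) · (f₁+f₂-g)`, so `e₁ ∈ {f₁, f₂}`. If `e₁ = f₁`, one of the two
new terms equals `f₁`, i.e. `g = 0` or `g = f₂`. If `e₁ = f₂`, neither new term equals `f₂`, so
`f₁` and `f₁ + g` both lie in `M` and `g ∈ ⟨f₂⟩`.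
-/

open Multiset AddSubgroup

lemma not_isAddCyclic_zmod_prod_self {m : ℕ} (hm : m ≠ 1) : ¬ IsAddCyclic (ZMod m × ZMod m) := by
  rcases Nat.eq_zero_or_pos m with rfl | hpos
  · exact not_isAddCyclic_prod_of_infinite_nontrivial ℤ ℤ
  · have : NeZero m := ⟨hpos.ne'⟩
    intro hcyc
    have := coprime_card_of_isAddCyclic_prod (ZMod m) (ZMod m)
    rw [Nat.card_zmod, Nat.coprime_self] at this
    exact hm this

lemma notMem_zmultiples_of_sup_eq_top {G : Type*} [AddCommGroup G] (hG : ¬ IsAddCyclic G)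
    {e₁ e₂ : G} (h : zmultiples e₁ ⊔ zmultiples e₂ = ⊤) : e₂ ∉ zmultiples e₁ := by
  intro he₂
  rw [sup_of_le_left (zmultiples_le.mpr he₂)] at h
  exact hG (isAddCyclic_iff_exists_zmultiples_eq_top.mpr ⟨e₁, h⟩)

lemma exists_eq_replicate_add_of_mem_upsilon {m : ℕ} (hm : m ≠ 1)
    {S : Multiset (ZMod m × ZMod m)} (hS : S ∈ Upsilon m) :
    ∃ (e₁ : ZMod m × ZMod m) (M : Multiset (ZMod m × ZMod m)),
      S = replicate (m - 1) e₁ + M ∧ e₁ ∉ M ∧ ∀ a ∈ M, ∀ b ∈ M, a - b ∈ zmultiples e₁ := by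
  obtain ⟨e₁, e₂, x, ⟨hsup, -⟩, -, -, rfl⟩ := hS
  have he₂ := notMem_zmultiples_of_sup_eq_top (not_isAddCyclic_zmod_prod_self hm) hsup
  refine ⟨e₁, _, rfl, ?_, ?_⟩
  · simp only [Multiset.mem_map, Finset.mem_val, Finset.mem_univ, true_and, not_exists]
    intro i hi
    refine he₂ (mem_zmultiples_iff.mpr ⟨1 - (x i : ℤ), ?_⟩)
    rw [sub_zsmul, one_zsmul, natCast_zsmul]
    nth_rewrite 1 [← hi]
    abel
  · simp only [Multiset.mem_map, Finset.mem_val, Finset.mem_univ, true_and]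
    rintro _ ⟨i, rfl⟩ _ ⟨j, rfl⟩
    refine mem_zmultiples_iff.mpr ⟨(x i : ℤ) - x j, ?_⟩
    rw [sub_zsmul, natCast_zsmul, natCast_zsmul]
    abel

lemma replicate_add_add_singleton_sub_pair {α : Type*} [DecidableEq α] {n : ℕ} (hn : n ≠ 0)
    (a b : α) (B : Multiset α) : replicate n a + B + {b} - {a, b} = replicate (n - 1) a + B := by
  obtain ⟨k, rfl⟩ := Nat.exists_eq_succ_of_ne_zero hn
  have : replicate (k + 1) a + B + {b} = replicate k a + B + {a, b} := by
    rw [replicate_succ, insert_eq_cons, ← singleton_add, ← singleton_add]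
    abel
  rw [this, add_tsub_cancel_right, Nat.succ_sub_one]

lemma mem_zmultiples_of_replicate_add_eq_replicate_add {G : Type*} [AddCommGroup G]
    [DecidableEq G] {n : ℕ} (hn : 3 ≤ n) {f₁ f₂ g e : G} (hf : f₁ ≠ f₂) {M : Multiset G}
    (he : e ∉ M) (hM : ∀ a ∈ M, ∀ b ∈ M, a - b ∈ zmultiples e)
    (h : replicate (n - 1) f₁ + replicate n f₂ + {f₁ + g, f₁ + f₂ - g} = replicate n e + M) :
    g ∈ zmultiples f₂ := by
  set P : Multiset G := {f₁ + g, f₁ + f₂ - g}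
  have hcount : count e (replicate (n - 1) f₁) + count e (replicate n f₂) + count e P = n := by
    rw [← count_add, ← count_add, h, count_add, count_replicate_self, count_eq_zero.2 he, add_zero]
  have hmemM : ∀ a ∈ replicate (n - 1) f₁ + replicate n f₂ + P, a ≠ e → a ∈ M := by
    intro a ha hne
    rw [h, mem_add] at ha
    exact ha.resolve_left (mt eq_of_mem_replicate hne)
  by_cases h₁ : e = f₁
  · subst e
    rw [count_replicate_self, count_replicate, if_neg hf.symm] at hcount
    have : f₁ ∈ P := count_pos.1 (by omega)
    simp only [P, insert_eq_cons, mem_cons, mem_singleton] at this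
    rcases this with h | h
    · rw [left_eq_add.1 h]
      exact zero_mem _
    · rw [eq_sub_iff_add_eq, add_right_inj] at h
      exact h ▸ mem_zmultiples f₂
  by_cases h₂ : e = f₂
  · subst e
    rw [count_replicate, if_neg hf, count_replicate_self] at hcount
    have hgP : f₁ + g ∈ P := by simp [P]
    have hg : f₁ + g ≠ f₂ := fun h => by
      have := count_pos.2 (h ▸ hgP)
      omega
    have hf₁ : f₁ ∈ replicate (n - 1) f₁ + replicate n f₂ + P :=
      mem_add.2 (.inl (mem_add.2 (.inl (mem_replicate.2 ⟨by omega, rfl⟩))))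
    simpa using hM _ (hmemM _ (mem_add.2 (.inr hgP)) hg) _ (hmemM _ hf₁ (Ne.symm h₁))
  · rw [count_replicate, count_replicate, if_neg (Ne.symm h₁), if_neg (Ne.symm h₂)] at hcount
    have : card P = 2 := rfl
    have := count_le_card e P
    omega

theorem stmt_6_general (m : ℕ) (hm : 4 ≤ m) (g f₁ f₂ : ZMod m × ZMod m)
    (hbasis : IsBasis f₁ f₂)
    (S : Multiset (ZMod m × ZMod m))
    (hS : S = Multiset.replicate (m - 1) f₁ + Multiset.replicate (m - 1) f₂ + {f₁ + f₂})
    (S' : Multiset (ZMod m × ZMod m))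
    (hS' : S' = (S - {f₁, f₁ + f₂}) + {f₁ + g, f₁ + f₂ - g})
    (hS'U : S' ∈ Upsilon m) :
    g ∈ AddSubgroup.zmultiples f₂ := by
  have hf : f₁ ≠ f₂ := fun h => notMem_zmultiples_of_sup_eq_top
    (not_isAddCyclic_zmod_prod_self (by omega)) hbasis.1 (h ▸ mem_zmultiples f₁)
  obtain ⟨e₁, M, hS'M, he₁M, hdiff⟩ := exists_eq_replicate_add_of_mem_upsilon (by omega) hS'U
  refine mem_zmultiples_of_replicate_add_eq_replicate_add (n := m - 1) (by omega) hf he₁M hdiff ?_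
  rw [← hS'M, hS', hS, replicate_add_add_singleton_sub_pair (by omega)]

theorem stmt_6 (m : ℕ) (hm : 4 ≤ m) (g f₁ f₂ : ZMod m × ZMod m)
    (hbasis : IsBasis f₁ f₂)
    (S : Multiset (ZMod m × ZMod m))
    (hS : S = Multiset.replicate (m - 1) f₁ + Multiset.replicate (m - 1) f₂ + {f₁ + f₂})
    (hSNU : S ∈ UpsilonNU m)
    (S' : Multiset (ZMod m × ZMod m))
    (hS' : S' = (S - {f₁, f₁ + f₂}) + {f₁ + g, f₁ + f₂ - g})
    (hS'U : S' ∈ Upsilon m) :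
    g ∈ AddSubgroup.zmultiples f₂ :=
  stmt_6_general m hm g f₁ f₂ hbasis S hS S' hS' hS'U
end

section
/- Let m ≥ 4, let G = (ℤ/mℤ)², let g ∈ G, and let S = f₁^[m−1] · f₂^[m−1] · (f₁+f₂) ∈ Υ_nu(G), where (f₁,f₂) is a basis of G. If S' = f₂^[−2] · S · (f₂+g) · (f₂−g) ∈ Υ_nu(G), then g = 0 and S' = S. -/
/-!
If `g ≠ 0`, then `f₂` occurs exactly `m - 3` times in `S'`. In a member of `Υ_nu` every
multiplicity is `0`, `1` or `m - 1`, so `m = 4` and `f₂` is the unique term of multiplicity `1`.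
But then `f₁ + f₂` occurs once or twice in `S'` (not three times, since `2 f₁ ≠ 0`), and neither
is possible.
-/

namespace IsBasis

variable {m : ℕ} {e₁ e₂ : ZMod m × ZMod m}

/-- Every element is some `a • e₁ + b • e₂`, so by finiteness the representation is unique. -/
theorem eq_zero_of_smul_add_smul_eq_zero_s9 [NeZero m] (h : IsBasis e₁ e₂) {a b : ZMod m}
    (hab : a • e₁ + b • e₂ = 0) : a = 0 ∧ b = 0 := by
  let φ : ZMod m × ZMod m → ZMod m × ZMod m := fun p => p.1 • e₁ + p.2 • e₂
  have hsurj : Function.Surjective φ := by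
    intro x
    obtain ⟨y, hy, z, hz, rfl⟩ := AddSubgroup.mem_sup.mp (h.1 ▸ AddSubgroup.mem_top x)
    obtain ⟨k, rfl⟩ := AddSubgroup.mem_zmultiples_iff.mp hy
    obtain ⟨l, rfl⟩ := AddSubgroup.mem_zmultiples_iff.mp hz
    exact ⟨(k, l), by simp [φ, Int.cast_smul_eq_zsmul]⟩
  have := Finite.injective_iff_surjective.mpr hsurj (a₁ := (a, b)) (a₂ := 0) (by simp [φ, hab])
  exact Prod.mk_eq_zero.mp this

theorem left_ne_zero_s9 (h : IsBasis e₁ e₂) (hm : 1 < m) : e₁ ≠ 0 := by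
  have : Fact (1 < m) := ⟨hm⟩
  intro he
  exact one_ne_zero (h.eq_zero_of_smul_add_smul_eq_zero_s9 (a := 1) (b := 0) (by simp [he])).1

theorem right_ne_zero_s9 (h : IsBasis e₁ e₂) (hm : 1 < m) : e₂ ≠ 0 := by
  have : Fact (1 < m) := ⟨hm⟩
  intro he
  exact one_ne_zero (h.eq_zero_of_smul_add_smul_eq_zero_s9 (a := 0) (b := 1) (by simp [he])).2

theorem ne_s9 (h : IsBasis e₁ e₂) (hm : 1 < m) : e₁ ≠ e₂ := by
  have : Fact (1 < m) := ⟨hm⟩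
  intro he
  exact one_ne_zero (h.eq_zero_of_smul_add_smul_eq_zero_s9 (a := 1) (b := -1) (by simp [he])).1

theorem left_add_left_ne_zero (h : IsBasis e₁ e₂) (hm : 2 < m) : e₁ + e₁ ≠ 0 := by
  have : Fact (1 < m) := ⟨by omega⟩
  have h2 : (2 : ZMod m) ≠ 0 := by
    simpa using (ZMod.natCast_eq_zero_iff 2 m).not.mpr (Nat.not_dvd_of_pos_of_lt two_pos hm)
  intro he
  exact h2 (h.eq_zero_of_smul_add_smul_eq_zero_s9 (a := 2) (b := 0) (by simp [two_smul, he])).1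

end IsBasis

section UpsilonNU

variable {m : ℕ} {T : Multiset (ZMod m × ZMod m)}

theorem count_eq_zero_or_one_or_sub_one_of_mem_upsilonNU (hm : 1 < m) (hT : T ∈ UpsilonNU m)
    (x : ZMod m × ZMod m) :
    T.count x = 0 ∨ T.count x = 1 ∨ T.count x = m - 1 := by
  obtain ⟨e₁, e₂, he, rfl⟩ := hT
  have h12 := he.ne_s9 hm
  have h1s : e₁ ≠ e₁ + e₂ := fun h => he.right_ne_zero_s9 hm (by simpa using h)
  have h2s : e₂ ≠ e₁ + e₂ := fun h => he.left_ne_zero_s9 hm (by simpa using h)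
  simp only [Multiset.count_add, Multiset.count_replicate, Multiset.count_singleton]
  split_ifs <;> grind

theorem eq_of_count_eq_one_of_mem_upsilonNU (hm : 2 < m) (hT : T ∈ UpsilonNU m)
    {x y : ZMod m × ZMod m} (hx : T.count x = 1) (hy : T.count y = 1) : x = y := by
  obtain ⟨e₁, e₂, he, rfl⟩ := hT
  suffices ∀ z, (Multiset.replicate (m - 1) e₁ + Multiset.replicate (m - 1) e₂ +
      {e₁ + e₂}).count z = 1 → z = e₁ + e₂ from (this x hx).trans (this y hy).symm
  intro z hz
  simp only [Multiset.count_add, Multiset.count_replicate, Multiset.count_singleton] at hz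
  split_ifs at hz <;> grind

end UpsilonNU

theorem eq_zero_of_add_pair_mem_upsilonNU {m : ℕ} (hm : 4 ≤ m) {f₁ f₂ g : ZMod m × ZMod m}
    (hf : IsBasis f₁ f₂)
    (hT : Multiset.replicate (m - 1) f₁ + Multiset.replicate (m - 3) f₂ + {f₁ + f₂} +
      {f₂ + g, f₂ - g} ∈ UpsilonNU m) : g = 0 := by
  set T := Multiset.replicate (m - 1) f₁ + Multiset.replicate (m - 3) f₂ + {f₁ + f₂} +
      {f₂ + g, f₂ - g}
  by_contra hg
  have hf₁ := hf.left_ne_zero_s9 (by omega)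
  have hf₂ := hf.right_ne_zero_s9 (by omega)
  have hf₁₂ := hf.ne_s9 (by omega)
  have hsum_f₁ : f₁ + f₂ ≠ f₁ := fun h => hf₂ (by linear_combination h)
  have hsum_f₂ : f₁ + f₂ ≠ f₂ := fun h => hf₁ (by linear_combination h)
  have hcount_f₂ : T.count f₂ = m - 3 := by
    have hplus : f₂ ≠ f₂ + g := fun h => hg (by linear_combination -h)
    have hminus : f₂ ≠ f₂ - g := fun h => hg (by linear_combination h)
    simp only [T, Multiset.count_add, Multiset.count_replicate, Multiset.count_singleton,
      Multiset.insert_eq_cons, Multiset.count_cons]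
    split_ifs <;> grind
  have hm4 : m = 4 := by
    rcases count_eq_zero_or_one_or_sub_one_of_mem_upsilonNU (by omega) hT f₂ with h | h | h <;>
      omega
  have hcount_sum : T.count (f₁ + f₂) = 1 ∨ T.count (f₁ + f₂) = 2 := by
    -- `f₁ + f₂` cannot be both `f₂ + g` and `f₂ - g`, as then `f₁ + f₁ = 0`
    have : ¬ (f₁ + f₂ = f₂ + g ∧ f₁ + f₂ = f₂ - g) := fun ⟨h₁, h₂⟩ =>
      hf.left_add_left_ne_zero (by omega) (by linear_combination h₁ + h₂)
    simp only [T, Multiset.count_add, Multiset.count_replicate, Multiset.count_singleton,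
      Multiset.insert_eq_cons, Multiset.count_cons]
    split_ifs <;> grind
  have hcount_sum_ne : T.count (f₁ + f₂) ≠ 1 := fun h =>
    hsum_f₂ (eq_of_count_eq_one_of_mem_upsilonNU (by omega) hT h (by omega))
  rcases count_eq_zero_or_one_or_sub_one_of_mem_upsilonNU (by omega) hT (f₁ + f₂) with
    h | h | h <;> omega

theorem stmt_9_general (m : ℕ) (hm : 4 ≤ m) (g f₁ f₂ : ZMod m × ZMod m)
    (hbasis : IsBasis f₁ f₂)
    (S : Multiset (ZMod m × ZMod m))
    (hS : S = Multiset.replicate (m - 1) f₁ + Multiset.replicate (m - 1) f₂ + {f₁ + f₂})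
    (S' : Multiset (ZMod m × ZMod m))
    (hS' : S' = (S - Multiset.replicate 2 f₂) + {f₂ + g, f₂ - g})
    (hS'U : S' ∈ UpsilonNU m) :
    g = 0 ∧ S' = S := by
  set R := Multiset.replicate (m - 1) f₁ + Multiset.replicate (m - 3) f₂ + {f₁ + f₂}
  have hSR : S = Multiset.replicate 2 f₂ + R := by
    have : Multiset.replicate (m - 1) f₂ =
        Multiset.replicate 2 f₂ + Multiset.replicate (m - 3) f₂ := by
      rw [← Multiset.replicate_add]; congr 1; omega
    rw [hS, this]; simp only [R]; abel
  have hS'R : S' = R + {f₂ + g, f₂ - g} := by rw [hS', hSR, add_tsub_cancel_left]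
  obtain rfl : g = 0 := eq_zero_of_add_pair_mem_upsilonNU hm hbasis (hS'R ▸ hS'U)
  refine ⟨rfl, ?_⟩
  rw [hS'R, hSR, add_zero, sub_zero, add_comm]
  rfl

theorem stmt_9 (m : ℕ) (hm : 4 ≤ m) (g f₁ f₂ : ZMod m × ZMod m)
    (hbasis : IsBasis f₁ f₂)
    (S : Multiset (ZMod m × ZMod m))
    (hS : S = Multiset.replicate (m - 1) f₁ + Multiset.replicate (m - 1) f₂ + {f₁ + f₂})
    (hSNU : S ∈ UpsilonNU m)
    (S' : Multiset (ZMod m × ZMod m))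
    (hS' : S' = (S - Multiset.replicate 2 f₂) + {f₂ + g, f₂ - g})
    (hS'U : S' ∈ UpsilonNU m) :
    g = 0 ∧ S' = S :=
  stmt_9_general m hm g f₁ f₂ hbasis S hS S' hS' hS'U
end

section
/- Let n ≥ 2, let G = (ℤ/nℤ)², and let S be a minimal zero-sum sequence over G of length |S| = 2n − 1 containing a term e₁ with multiplicity at least n − 1. Then there exists e₂ ∈ G such that (e₁,e₂) is a basis of G and S = e₁^[n−1] · ∏_{i=1}^{n}(x_i e₁ + e₂) for some x₁,…,x_n ∈ [0,n−1] with x₁ + … + x_n ≡ 1 (mod n). -/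
/-- A minimal zero-sum sequence: a nontrivial zero-sum sequence that cannot be factored
into two proper nontrivial zero-sum subsequences (equivalently, its only zero-sum
subsequences are the trivial one and itself). -/
def IsMinZeroSum {G : Type*} [AddCommGroup G] (S : Multiset G) : Prop :=
  S ≠ 0 ∧ S.sum = 0 ∧ ∀ T ≤ S, T.sum = 0 → T = 0 ∨ T = S

/-- `Σ_{≤ k}(S)`: sums of nonempty subsequences of `S` of length at most `k`. -/
def SigmaLe {G : Type*} [AddCommGroup G] (k : ℕ) (S : Multiset G) : Set G :=
  { g | ∃ T ≤ S, T ≠ 0 ∧ Multiset.card T ≤ k ∧ T.sum = g }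

/-- Property B for `(ℤ/nℤ)²`: every minimal zero-sum sequence of length `2n - 1` has the
form `e₁^[n-1] · ∏_{i=1}^n (xᵢe₁ + e₂)` for some basis `(e₁, e₂)` and
`x₁, …, x_n ∈ [0, n-1]` with `x₁ + ⋯ + x_n ≡ 1 (mod n)`. -/
def PropertyB (n : ℕ) : Prop :=
  ∀ S : Multiset (ZMod n × ZMod n), IsMinZeroSum S → Multiset.card S = 2 * n - 1 →
    ∃ (e₁ e₂ : ZMod n × ZMod n) (x : Fin n → ℕ),
      IsBasis e₁ e₂ ∧ (∀ i, x i ≤ n - 1) ∧ (∑ i, x i) % n = 1 % n ∧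
      S = Multiset.replicate (n - 1) e₁ +
          Multiset.map (fun i => x i • e₁ + e₂) (Finset.univ : Finset (Fin n)).val

/-!
Since `S` is a minimal zero-sum sequence of length `2n - 1` containing `e₁^[n-1]`, the element `e₁`
has order `n`. Write `S = e₁^[n-1] · T` with `|T| = n`. A nonempty proper subsequence of `T` whose
sum lies in `⟨e₁⟩` could be completed by at most `n - 1` copies of `e₁` to a proper zero-sum
subsequence of `S`; so the image of `T` in `Q = G/⟨e₁⟩`, a group of order `n`, is a sequence of
length `|Q|` without nonempty proper zero-sum subsequences. The partial sums of any ordering of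
such a sequence are pairwise distinct, hence exhaust `Q`; comparing the orderings `a b …` and
`b a …` forces `a = b`. So `T` maps to `q^[n]` with `q` a generator of `Q`, any `e₂ ∈ T` completes
`e₁` to a basis, every term of `T` is `x e₁ + e₂`, and `σ(T) = e₁` gives `∑ xᵢ ≡ 1 (mod n)`.
-/

open Multiset AddSubgroup

def NoProperZeroSum {G : Type*} [AddCommGroup G] (T : Multiset G) : Prop :=
  ∀ U ≤ T, U ≠ 0 → U.sum = 0 → U = T

theorem Multiset.exists_le_map_eq_of_le_map {α β : Type*} {f : α → β} {s : Multiset β}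
    {t : Multiset α} (h : s ≤ t.map f) : ∃ u ≤ t, u.map f = s := by
  obtain ⟨l, rfl⟩ : ∃ l : List β, (l : Multiset β) = s := Quot.exists_rep s
  obtain ⟨m, rfl⟩ : ∃ m : List α, (m : Multiset α) = t := Quot.exists_rep t
  obtain ⟨w, hw, hwm⟩ := coe_le.mp h
  obtain ⟨l', hl', rfl⟩ := List.sublist_map_iff.mp hwm
  exact ⟨l', hl'.subperm, coe_eq_coe.mpr hw⟩

theorem Multiset.exists_eq_map_univ_val {α : Type*} {M : Multiset α} {n : ℕ}
    (h : card M = n) : ∃ f : Fin n → α, M = (Finset.univ : Finset (Fin n)).val.map f := by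
  obtain ⟨l, rfl⟩ : ∃ l : List α, (l : Multiset α) = M := Quot.exists_rep M
  rw [coe_card] at h
  subst h
  exact ⟨l.get, by rw [Fin.univ_val_map, List.ofFn_get]⟩

section ZeroSum

variable {G : Type*} [AddCommGroup G]

theorem IsMinZeroSum.nsmul_ne_zero {S : Multiset G} (hS : IsMinZeroSum S) {g : G} {k j : ℕ}
    (hk : replicate k g ≤ S) (hlt : k < card S) (hj : 0 < j) (hjk : j ≤ k) : j • g ≠ 0 := by
  intro hjg
  have hle : replicate j g ≤ S := ((replicate_le_replicate g).mpr hjk).trans hk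
  rcases hS.2.2 _ hle (by rw [sum_replicate, hjg]) with h | h <;>
    · have := congrArg card h
      simp only [card_replicate, card_zero] at this
      omega

theorem NoProperZeroSum.sum_take_injective {l : List G} (h : NoProperZeroSum (l : Multiset G)) :
    Function.Injective fun i : Fin l.length => (l.take i).sum := by
  intro i j hij
  wlog hlt : i < j generalizing i j
  · rcases (not_lt.mp hlt).eq_or_lt with rfl | hgt
    · rfl
    · exact (this hij.symm hgt).symm
  exfalso
  set seg := (l.take j).drop i
  have hsplit : (l.take j).sum = (l.take i).sum + seg.sum := by
    rw [← List.sum_take_add_sum_drop (l.take j) i, List.take_take,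
      min_eq_left (Fin.val_le_of_le hlt.le)]
  have hseg : seg.sum = 0 := by
    rwa [← show (l.take i).sum = (l.take j).sum from hij, left_eq_add] at hsplit
  have hlen : seg.length = j - i := by simp [seg]
  have := h seg ((List.drop_sublist _ _).trans (List.take_sublist _ _)).subperm
    (by rw [Ne, coe_eq_zero, ← List.length_eq_zero_iff]; omega) hseg
  have := congrArg card this
  simp only [coe_card] at this
  omega

variable [Finite G]

theorem NoProperZeroSum.eq_of_mem {T : Multiset G} (hT : NoProperZeroSum T)
    (hcard : card T = Nat.card G) {a b : G} (ha : a ∈ T) (hb : b ∈ T) : a = b := by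
  by_contra hab
  obtain ⟨t, rfl⟩ := exists_cons_of_mem ha
  obtain ⟨r, rfl⟩ := exists_cons_of_mem ((mem_cons.mp hb).resolve_left (Ne.symm hab))
  obtain ⟨l, rfl⟩ : ∃ l : List G, (l : Multiset G) = r := Quot.exists_rep r
  have h₁ : NoProperZeroSum ((a :: b :: l : List G) : Multiset G) := hT
  have h₂ : NoProperZeroSum ((b :: a :: l : List G) : Multiset G) := by
    rwa [← cons_coe, ← cons_coe, cons_swap]
  have hlen : (a :: b :: l).length = Nat.card G := by simpa using hcard
  obtain ⟨i, hi⟩ := (h₁.sum_take_injective.bijective_of_nat_card_le (by simp [hlen])).2 b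
  have hi1 : (i : ℕ) = 1 := by
    by_contra hne
    have hswap : ((b :: a :: l).take i).sum = ((a :: b :: l).take i).sum := by
      rcases i with ⟨_ | _ | k, hk⟩ <;> simp [add_left_comm] at hne ⊢
    have := h₂.sum_take_injective (a₁ := ⟨1, by simp⟩) (a₂ := ⟨i, by simpa using i.isLt⟩)
      (by simpa [hswap] using hi.symm)
    exact hne (congrArg Fin.val this).symm
  exact hab (by simpa [hi1] using hi)

theorem NoProperZeroSum.exists_eq_replicate {T : Multiset G} (hT : NoProperZeroSum T)
    (hcard : card T = Nat.card G) :
    ∃ q, T = replicate (Nat.card G) q ∧ addOrderOf q = Nat.card G := by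
  have hpos : 0 < Nat.card G := Nat.card_pos
  obtain ⟨q, hq⟩ := card_pos_iff_exists_mem.mp (hcard ▸ hpos)
  have hTq : T = replicate (Nat.card G) q :=
    eq_replicate.mpr ⟨hcard, fun b hb => hT.eq_of_mem hcard hb hq⟩
  refine ⟨q, hTq, (addOrderOf_eq_iff hpos).mpr ⟨card_nsmul_eq_zero', fun m hm hm0 hmq => ?_⟩⟩
  have hle : replicate m q ≤ T := hTq ▸ (replicate_le_replicate q).mpr hm.le
  have hne : replicate m q ≠ 0 := by rw [Ne, ← card_eq_zero, card_replicate]; omega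
  have := congrArg card (hT _ hle hne (by rw [sum_replicate, hmq]))
  rw [card_replicate, hcard] at this
  omega

end ZeroSum

section QuotientZMultiples

variable {G : Type*} [AddCommGroup G]

theorem IsMinZeroSum.noProperZeroSum_map_mk {e : G} (he : IsOfFinAddOrder e) {T : Multiset G}
    (hS : IsMinZeroSum (replicate (addOrderOf e - 1) e + T)) :
    NoProperZeroSum (T.map (QuotientAddGroup.mk' (zmultiples e))) := by
  classical
  intro U hU hU0 hUsum
  obtain ⟨V, hVT, rfl⟩ := exists_le_map_eq_of_le_map hU
  have hmem : -V.sum ∈ zmultiples e := by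
    rwa [neg_mem_iff, ← QuotientAddGroup.eq_zero_iff, ← QuotientAddGroup.mk'_apply,
      map_multiset_sum]
  obtain ⟨j, hj, hje⟩ :=
    Finset.mem_image.mp (he.mem_zmultiples_iff_mem_range_addOrderOf.mp hmem)
  rw [Finset.mem_range] at hj
  have hle : replicate j e + V ≤ replicate (addOrderOf e - 1) e + T :=
    add_le_add ((replicate_le_replicate e).mpr (by omega)) hVT
  rcases hS.2.2 _ hle (by rw [sum_add, sum_replicate, hje, neg_add_cancel]) with h | h
  · exact absurd (by rw [(add_eq_zero.mp h).2, Multiset.map_zero]) hU0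
  · have := congrArg card h
    have := card_le_card hVT
    simp only [card_add, card_replicate] at *
    rw [eq_of_le_of_card_le hVT (by omega)]

theorem isBasis_of_zmultiples_mk_eq_top {e₁ e₂ : G}
    (htop : zmultiples (e₂ : G ⧸ zmultiples e₁) = ⊤)
    (hord : addOrderOf e₂ ∣ addOrderOf (e₂ : G ⧸ zmultiples e₁)) : IsBasis e₁ e₂ := by
  refine ⟨?_, ?_⟩
  · have := comap_map_eq (QuotientAddGroup.mk' (zmultiples e₁)) (zmultiples e₂)
    rw [AddMonoidHom.map_zmultiples, QuotientAddGroup.mk'_apply, htop, comap_top,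
      QuotientAddGroup.ker_mk'] at this
    rw [sup_comm, this]
  · rw [eq_bot_iff]
    intro g hg
    obtain ⟨z, rfl⟩ := mem_zmultiples_iff.mp (mem_inf.mp hg).2
    have hz : z • (e₂ : G ⧸ zmultiples e₁) = 0 := by
      rw [← QuotientAddGroup.mk_zsmul, QuotientAddGroup.eq_zero_iff]
      exact (mem_inf.mp hg).1
    exact mem_bot.mpr (addOrderOf_dvd_iff_zsmul_eq_zero.mp
      ((Int.natCast_dvd_natCast.mpr hord).trans (addOrderOf_dvd_iff_zsmul_eq_zero.mpr hz)))

theorem NoProperZeroSum.exists_isBasis [Finite G] {e₁ : G} {T : Multiset G}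
    (hT : NoProperZeroSum (T.map (QuotientAddGroup.mk' (zmultiples e₁))))
    (hcard : card T = Nat.card (G ⧸ zmultiples e₁))
    (hexp : ∀ g : G, Nat.card (G ⧸ zmultiples e₁) • g = 0) :
    ∃ e₂ ∈ T, IsBasis e₁ e₂ ∧ ∀ t ∈ T, (t : G ⧸ zmultiples e₁) = e₂ := by
  obtain ⟨q, hTq, hq⟩ := hT.exists_eq_replicate (by rw [card_map, hcard])
  have hmk : ∀ t ∈ T, (t : G ⧸ zmultiples e₁) = q := fun t ht =>
    eq_of_mem_replicate (hTq ▸ mem_map_of_mem _ ht)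
  obtain ⟨e₂, he₂⟩ := card_pos_iff_exists_mem.mp (hcard ▸ Nat.card_pos)
  refine ⟨e₂, he₂, isBasis_of_zmultiples_mk_eq_top ?_ ?_,
    fun t ht => (hmk t ht).trans (hmk e₂ he₂).symm⟩
  · exact eq_top_of_card_eq _ (by rw [Nat.card_zmultiples, hmk e₂ he₂, hq])
  · rw [hmk e₂ he₂, hq]
    exact addOrderOf_dvd_of_nsmul_eq_zero (hexp e₂)

theorem exists_eq_map_nsmul_add_of_mk_eq {e₁ e₂ : G} (he₁ : IsOfFinAddOrder e₁)
    {T : Multiset G} {n : ℕ} (hcard : card T = n)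
    (hmk : ∀ t ∈ T, (t : G ⧸ zmultiples e₁) = e₂) :
    ∃ x : Fin n → ℕ, (∀ i, x i < addOrderOf e₁) ∧
      T = (Finset.univ : Finset (Fin n)).val.map fun i => x i • e₁ + e₂ := by
  classical
  obtain ⟨g, rfl⟩ := exists_eq_map_univ_val hcard
  have hcoord : ∀ i, ∃ x < addOrderOf e₁, g i = x • e₁ + e₂ := by
    intro i
    have hsub :=
      QuotientAddGroup.eq_iff_sub_mem.mp (hmk _ (mem_map_of_mem g (Finset.mem_univ i)))
    obtain ⟨x, hx, hxe⟩ :=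
      Finset.mem_image.mp (he₁.mem_zmultiples_iff_mem_range_addOrderOf.mp hsub)
    exact ⟨x, Finset.mem_range.mp hx, eq_add_of_sub_eq hxe.symm⟩
  choose x hx hgx using hcoord
  exact ⟨x, hx, map_congr rfl fun i _ => hgx i⟩

end QuotientZMultiples

theorem stmt_17 (n : ℕ) (hn : 2 ≤ n)
    (S : Multiset (ZMod n × ZMod n))
    (hmin : IsMinZeroSum S) (hcard : Multiset.card S = 2 * n - 1)
    (e₁ : ZMod n × ZMod n) (he₁ : n - 1 ≤ S.count e₁) :
    ∃ (e₂ : ZMod n × ZMod n) (x : Fin n → ℕ),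
      IsBasis e₁ e₂ ∧ (∀ i, x i ≤ n - 1) ∧ (∑ i, x i) % n = 1 % n ∧
      S = Multiset.replicate (n - 1) e₁ +
          Multiset.map (fun i => x i • e₁ + e₂) (Finset.univ : Finset (Fin n)).val := by
  have : NeZero n := ⟨by omega⟩
  have hexp : ∀ g : ZMod n × ZMod n, n • g = 0 := fun g => by ext <;> simp
  have hord : addOrderOf e₁ = n :=
    (addOrderOf_eq_iff (by omega)).mpr ⟨hexp e₁, fun m hm hm0 =>
      hmin.nsmul_ne_zero (le_count_iff_replicate_le.mp he₁) (by omega) hm0 (by omega)⟩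
  have he₁fin : IsOfFinAddOrder e₁ := isOfFinAddOrder_of_finite e₁
  obtain ⟨T, rfl⟩ := Multiset.le_iff_exists_add.mp (le_count_iff_replicate_le.mp he₁)
  have hTcard : card T = n := by rw [card_add, card_replicate] at hcard; omega
  have hTsum : T.sum = e₁ := by
    have h₁ := hmin.2.1
    rw [sum_add, sum_replicate] at h₁
    exact add_left_cancel (h₁.trans (by rw [← succ_nsmul, Nat.sub_add_cancel (by omega), hexp]))
  have hQ : Nat.card ((ZMod n × ZMod n) ⧸ zmultiples e₁) = n := by
    have := card_eq_card_quotient_mul_card_addSubgroup (zmultiples e₁)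
    rw [Nat.card_zmultiples, hord, Nat.card_prod, Nat.card_zmod] at this
    exact Nat.eq_of_mul_eq_mul_right (by omega) this.symm
  have hfree : NoProperZeroSum (T.map (QuotientAddGroup.mk' (zmultiples e₁))) :=
    IsMinZeroSum.noProperZeroSum_map_mk he₁fin (by rwa [hord])
  obtain ⟨e₂, he₂, hbasis, hmk⟩ :=
    hfree.exists_isBasis (by rw [hTcard, hQ]) (by rw [hQ]; exact hexp)
  obtain ⟨x, hxn, hTx⟩ := exists_eq_map_nsmul_add_of_mk_eq he₁fin hTcard hmk
  refine ⟨e₂, x, hbasis, fun i => by have := hxn i; omega, ?_, by rw [hTx]⟩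
  have hsum : (∑ i, x i) • e₁ = 1 • e₁ :=
    calc (∑ i, x i) • e₁ = (∑ i, x i) • e₁ + n • e₂ := by rw [hexp, add_zero]
      _ = T.sum := by
        rw [hTx, ← Finset.sum_eq_multiset_sum, Finset.sum_add_distrib, Finset.sum_const,
          Finset.card_univ, Fintype.card_fin, Finset.sum_smul]
      _ = 1 • e₁ := by rw [hTsum, one_nsmul]
  have hmod := nsmul_eq_nsmul_iff_modEq.mp hsum
  rwa [hord] at hmod
end

section
/- Let n ≥ 2, let G = (ℤ/nℤ)², and let S be a sequence over G with 0 ∉ Σ_{≤ n−1}(S). If g, h ∈ supp(S) with the multiplicity of g in S at least n − 2 and h ∈ ⟨g⟩, then h = g. -/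
/-!
Write `h = m • g` with `0 ≤ m < ord g ≤ n`. If `m = 0` then `h = 0` is a zero sum of length one,
and if `m = 1` then `h = g`. Otherwise `h · g^[ord g - m]` is a zero-sum subsequence of
length `ord g - m + 1 ≤ n - 1`, which uses at most `n - 2` copies of `g`.
-/

open Multiset AddSubgroup

lemma Multiset.cons_replicate_le {α : Type*} [DecidableEq α] {S : Multiset α} {a b : α} {k : ℕ}
    (ha : a ∈ S) (hab : a ≠ b) (hk : k ≤ S.count b) : a ::ₘ replicate k b ≤ S := by
  refine ((cons_le_cons_iff a).2 (le_count_iff_replicate_le.1 ?_)).trans_eq (cons_erase ha)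
  rwa [count_erase_of_ne hab.symm]

theorem eq_of_mem_zmultiples_of_zero_notMem_sigmaLe {G : Type*} [AddCommGroup G] [DecidableEq G]
    {n : ℕ} (hn : 2 ≤ n) {S : Multiset G} (h0 : 0 ∉ SigmaLe (n - 1) S) {g h : G}
    (hng : n • g = 0) (hh : h ∈ S) (hcount : n - 2 ≤ S.count g) (hmem : h ∈ zmultiples g) :
    h = g := by
  have hfin : IsOfFinAddOrder g := isOfFinAddOrder_iff_nsmul_eq_zero.2 ⟨n, by omega, hng⟩
  have hord : addOrderOf g ≤ n := addOrderOf_le_of_nsmul_eq_zero (by omega) hng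
  obtain ⟨m, hm, rfl⟩ := Finset.mem_image.1 (hfin.mem_zmultiples_iff_mem_range_addOrderOf.1 hmem)
  rw [Finset.mem_range] at hm
  by_contra hne
  have hm0 : m ≠ 0 := by
    rintro rfl
    exact h0 ⟨{0 • g}, singleton_le.2 hh, singleton_ne_zero _, by simp; omega, by simp⟩
  have hm1 : m ≠ 1 := by
    rintro rfl
    exact hne (one_nsmul g)
  refine h0 ⟨m • g ::ₘ replicate (addOrderOf g - m) g, cons_replicate_le hh hne (by omega),
    cons_ne_zero, by simp; omega, ?_⟩
  rw [sum_cons, sum_replicate, ← add_nsmul, Nat.add_sub_cancel' hm.le, addOrderOf_nsmul_eq_zero]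

theorem stmt_18_general (n : ℕ) (hn : 2 ≤ n)
    (S : Multiset (ZMod n × ZMod n))
    (h0 : (0 : ZMod n × ZMod n) ∉ SigmaLe (n - 1) S)
    (g h : ZMod n × ZMod n) (hh : h ∈ S)
    (hcount : n - 2 ≤ S.count g) (hmem : h ∈ AddSubgroup.zmultiples g) :
    h = g :=
  eq_of_mem_zmultiples_of_zero_notMem_sigmaLe hn h0 (by ext <;> simp) hh hcount hmem

theorem stmt_18 (n : ℕ) (hn : 2 ≤ n)
    (S : Multiset (ZMod n × ZMod n))
    (h0 : (0 : ZMod n × ZMod n) ∉ SigmaLe (n - 1) S)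
    (g h : ZMod n × ZMod n) (hg : g ∈ S) (hh : h ∈ S)
    (hcount : n - 2 ≤ S.count g) (hmem : h ∈ AddSubgroup.zmultiples g) :
    h = g :=
  stmt_18_general n hn S h0 g h hh hcount hmem
end

section
/- Let n ≥ 2, let G = (ℤ/nℤ)², and let S = e₁^[n−1] · e₂^[n−1] · e₃^[n−1] be a sequence over G with 0 ∉ Σ_{≤ n}(S), where e₁, e₂, e₃ ∈ G. Then each of e₁, e₂, e₃ has order n, and each of the pairs (e₁,e₂), (e₁,e₃), and (e₂,e₃) is a basis of G. -/
/-!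
A nonempty subsequence of `e^[n-1] · f^[n-1]` of length at most `n` has sum `a • e + b • f` with
`a, b < n` and `0 < a + b ≤ n`. Taking `b = 0` shows that `e` has order `n`. A nonzero common
element `a • e = b • f` of `⟨e⟩` and `⟨f⟩` would give the short zero sum `a • e + (n - b) • f`
(if `a ≤ b`) or `(n - a) • e + b • f` (if `b ≤ a`); so `⟨e⟩ ∩ ⟨f⟩ = 0`, and then
`|⟨e⟩ + ⟨f⟩| = n² = |G|`. Each pair of `e₁, e₂, e₃` spans such a subsequence of `S`.
-/

theorem AddSubgroup.sup_eq_top_of_disjoint_of_card_mul {G : Type*} [AddGroup G] [Finite G]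
    {H K : AddSubgroup G} (hdisj : Disjoint H K) (hcard : Nat.card H * Nat.card K = Nat.card G) :
    H ⊔ K = ⊤ := by
  have hsurj : Function.Surjective (fun g => g.1 + g.2 : H × K → G) :=
    ((Nat.bijective_iff_injective_and_card _).mpr
      ⟨add_injective_of_disjoint hdisj, (Nat.card_prod H K).trans hcard⟩).surjective
  refine (AddSubgroup.eq_top_iff' _).mpr fun g => ?_
  obtain ⟨⟨h, k⟩, rfl⟩ := hsurj g
  exact AddSubgroup.add_mem_sup h.2 k.2

section SigmaLe

open Multiset

variable {G : Type*} [AddCommGroup G] {n : ℕ} {e f : G}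

theorem SigmaLe.mono {k : ℕ} {S T : Multiset G} (h : T ≤ S) : SigmaLe k T ⊆ SigmaLe k S :=
  fun _ ⟨U, hU, hne, hcard, hsum⟩ => ⟨U, hU.trans h, hne, hcard, hsum⟩

theorem nsmul_add_nsmul_ne_zero_of_zero_notMem_sigmaLe {k m a b : ℕ}
    (h0 : (0 : G) ∉ SigmaLe k (replicate m e + replicate m f)) (ha : a ≤ m) (hb : b ≤ m)
    (hpos : 0 < a + b) (hk : a + b ≤ k) : a • e + b • f ≠ 0 := fun hsum =>
  h0 ⟨replicate a e + replicate b f,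
    add_le_add (replicate_le_replicate e |>.mpr ha) (replicate_le_replicate f |>.mpr hb),
    card_pos.mp (by simpa using hpos), by simpa using hk, by simpa using hsum⟩

theorem addOrderOf_eq_of_zero_notMem_sigmaLe (hn : 0 < n) (hexp : n • e = 0)
    (h0 : (0 : G) ∉ SigmaLe n (replicate (n - 1) e + replicate (n - 1) f)) :
    addOrderOf e = n :=
  (addOrderOf_eq_iff hn).mpr ⟨hexp, fun a ha hpos hae =>
    nsmul_add_nsmul_ne_zero_of_zero_notMem_sigmaLe h0 (b := 0) (by omega) (by omega) hpos
      (by omega) (by simpa using hae)⟩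

theorem disjoint_zmultiples_of_zero_notMem_sigmaLe (hn : 0 < n) (he : addOrderOf e = n)
    (hf : addOrderOf f = n)
    (h0 : (0 : G) ∉ SigmaLe n (replicate (n - 1) e + replicate (n - 1) f)) :
    Disjoint (AddSubgroup.zmultiples e) (AddSubgroup.zmultiples f) := by
  classical
  have mem_iff {g x : G} (hg : addOrderOf g = n) :
      x ∈ AddSubgroup.zmultiples g ↔ ∃ a < n, a • g = x := by
    rw [(addOrderOf_pos_iff.mp (hg ▸ hn)).mem_zmultiples_iff_mem_range_addOrderOf, hg]
    simp
  rw [AddSubgroup.disjoint_def]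
  intro x hxe hxf
  obtain ⟨a, ha, rfl⟩ := (mem_iff he).mp hxe
  obtain ⟨b, hb, hbx⟩ := (mem_iff hf).mp hxf
  by_contra hx
  have ha0 : a ≠ 0 := by rintro rfl; simp at hx
  have hb0 : b ≠ 0 := by rintro rfl; simp [← hbx] at hx
  rcases le_total a b with hab | hba
  · refine nsmul_add_nsmul_ne_zero_of_zero_notMem_sigmaLe h0 (a := a) (b := n - b) (by omega)
      (by omega) (by omega) (by omega) ?_
    rw [← hbx, ← add_nsmul, Nat.add_sub_cancel' hb.le, ← hf, addOrderOf_nsmul_eq_zero]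
  · refine nsmul_add_nsmul_ne_zero_of_zero_notMem_sigmaLe h0 (a := n - a) (b := b) (by omega)
      (by omega) (by omega) (by omega) ?_
    rw [hbx, ← add_nsmul, Nat.sub_add_cancel ha.le, ← he, addOrderOf_nsmul_eq_zero]

theorem isBasis_of_zero_notMem_sigmaLe [Finite G] (hn : 0 < n) (hexp : ∀ g : G, n • g = 0)
    (hcard : Nat.card G = n * n)
    (h0 : (0 : G) ∉ SigmaLe n (replicate (n - 1) e + replicate (n - 1) f)) :
    addOrderOf e = n ∧ addOrderOf f = n ∧ IsBasis e f := by
  have he := addOrderOf_eq_of_zero_notMem_sigmaLe hn (hexp e) h0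
  have hf := addOrderOf_eq_of_zero_notMem_sigmaLe hn (hexp f) (add_comm (replicate _ e) _ ▸ h0)
  have hdisj := disjoint_zmultiples_of_zero_notMem_sigmaLe hn he hf h0
  refine ⟨he, hf, AddSubgroup.sup_eq_top_of_disjoint_of_card_mul hdisj ?_, hdisj.eq_bot⟩
  rw [Nat.card_zmultiples, Nat.card_zmultiples, he, hf, hcard]

end SigmaLe

theorem stmt_19 (n : ℕ) (hn : 2 ≤ n) (e₁ e₂ e₃ : ZMod n × ZMod n)
    (S : Multiset (ZMod n × ZMod n))
    (hS : S = Multiset.replicate (n - 1) e₁ + Multiset.replicate (n - 1) e₂ +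
        Multiset.replicate (n - 1) e₃)
    (h0 : (0 : ZMod n × ZMod n) ∉ SigmaLe n S) :
    (addOrderOf e₁ = n ∧ addOrderOf e₂ = n ∧ addOrderOf e₃ = n) ∧
      IsBasis e₁ e₂ ∧ IsBasis e₁ e₃ ∧ IsBasis e₂ e₃ := by
  have : NeZero n := ⟨by omega⟩
  have pair (e f : ZMod n × ZMod n)
      (hef : Multiset.replicate (n - 1) e + Multiset.replicate (n - 1) f ≤ S) :
      addOrderOf e = n ∧ addOrderOf f = n ∧ IsBasis e f :=
    isBasis_of_zero_notMem_sigmaLe (by omega) (fun g => by ext <;> simp)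
      (by simp) fun h => h0 (SigmaLe.mono hef h)
  obtain ⟨h₁, h₂, b₁₂⟩ := pair e₁ e₂ (hS ▸ Multiset.le_add_right _ _)
  obtain ⟨-, h₃, b₁₃⟩ := pair e₁ e₃ (hS ▸ add_right_comm (Multiset.replicate _ e₁) _ _ ▸
    Multiset.le_add_right _ _)
  obtain ⟨-, -, b₂₃⟩ := pair e₂ e₃ (hS ▸ add_assoc (Multiset.replicate _ e₁) _ _ ▸
    Multiset.le_add_left _ _)
  exact ⟨⟨h₁, h₂, h₃⟩, b₁₂, b₁₃, b₂₃⟩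
end
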